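/- arXiv:1511.01075 — 5 statements merged into one kernel-verified Lean document; each statement's English description precedes it below -/
import Mathlib

section
/- Let 𝔽 be an infinite field of characteristic p with 0 < p ≤ n and p ≠ 2, and let d ≥ 1. Then the invariant tr(X₁⁺ X₂⁺ ⋯ X_d⁺) is indecomposable in the algebra R₊^{O(n)} of invariants of symmetric matrices; that is, tr(X₁⁺⋯X_d⁺) does not lie in the 𝔽-span of products g·h with g, h ∈ R₊^{O(n)} homogeneous of positive degree. -/
open Matrix
noncomputable section

/-- The polynomial ring `R = 𝔽[x_{ij}(k)]` in `n² d` variables. -/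
abbrev Rpoly (𝔽 : Type) [Field 𝔽] (n d : ℕ) : Type :=
  MvPolynomial (Fin n × Fin n × Fin d) 𝔽

/-- The generic matrix `X_k` with `(X_k)_{ij} = x_{ij}(k)`. -/
def Xgen (𝔽 : Type) [Field 𝔽] (n d : ℕ) (k : Fin d) :
    Matrix (Fin n) (Fin n) (Rpoly 𝔽 n d) :=
  fun i j => MvPolynomial.X (i, j, k)

/-- The symmetric generic matrix `X_k⁺`. -/
def XgenSym (𝔽 : Type) [Field 𝔽] (n d : ℕ) (k : Fin d) :
    Matrix (Fin n) (Fin n) (Rpoly 𝔽 n d) :=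
  fun i j => if j ≤ i then MvPolynomial.X (i, j, k) else MvPolynomial.X (j, i, k)

/-- The skew-symmetric generic matrix `X_k⁻`. -/
def XgenSkew (𝔽 : Type) [Field 𝔽] (n d : ℕ) (k : Fin d) :
    Matrix (Fin n) (Fin n) (Rpoly 𝔽 n d) :=
  fun i j =>
    if j < i then MvPolynomial.X (i, j, k)
    else if i < j then - MvPolynomial.X (j, i, k)
    else 0

/-- `σ_t(A)`, the `t`-th coefficient of the characteristic polynomial of `A`
(so `σ₁ = tr`, `σ_n = det`). -/
def sigmaCoeff {𝔽 : Type} [Field 𝔽] {n d : ℕ} (t : ℕ)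
    (A : Matrix (Fin n) (Fin n) (Rpoly 𝔽 n d)) : Rpoly 𝔽 n d :=
  (-1) ^ t * A.charpoly.coeff (n - t)

/-- The algebra `R^{O(n)}` of matrix `O(n)`-invariants: generated by all `σ_t(A)`,
`1 ≤ t ≤ n`, where `A` is a nonempty product of generic and transposed generic matrices. -/
def invO (𝔽 : Type) [Field 𝔽] (n d : ℕ) : Subalgebra 𝔽 (Rpoly 𝔽 n d) :=
  Algebra.adjoin 𝔽
    {f | ∃ t, 1 ≤ t ∧ t ≤ n ∧
      ∃ w : List (Matrix (Fin n) (Fin n) (Rpoly 𝔽 n d)), w ≠ [] ∧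
        (∀ m ∈ w, (∃ k, m = Xgen 𝔽 n d k) ∨ (∃ k, m = (Xgen 𝔽 n d k)ᵀ)) ∧
        f = sigmaCoeff t w.prod}

/-- The algebra `R₊^{O(n)}`, generated by all `σ_t(A)` for `A` a nonempty product of
symmetric generic matrices. -/
def invOplus (𝔽 : Type) [Field 𝔽] (n d : ℕ) : Subalgebra 𝔽 (Rpoly 𝔽 n d) :=
  Algebra.adjoin 𝔽
    {f | ∃ t, 1 ≤ t ∧ t ≤ n ∧
      ∃ w : List (Matrix (Fin n) (Fin n) (Rpoly 𝔽 n d)), w ≠ [] ∧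
        (∀ m ∈ w, ∃ k, m = XgenSym 𝔽 n d k) ∧
        f = sigmaCoeff t w.prod}

/-- The algebra `R₋^{O(n)}`, generated by all `σ_t(A)` for `A` a nonempty product of
skew-symmetric generic matrices. -/
def invOminus (𝔽 : Type) [Field 𝔽] (n d : ℕ) : Subalgebra 𝔽 (Rpoly 𝔽 n d) :=
  Algebra.adjoin 𝔽
    {f | ∃ t, 1 ≤ t ∧ t ≤ n ∧
      ∃ w : List (Matrix (Fin n) (Fin n) (Rpoly 𝔽 n d)), w ≠ [] ∧
        (∀ m ∈ w, ∃ k, m = XgenSkew 𝔽 n d k) ∧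
        f = sigmaCoeff t w.prod}

/-- `f` is decomposable in the subalgebra `A`: it lies in the `𝔽`-span of products `g·h`
with `g, h ∈ A` homogeneous of positive degree. -/
def Decomposable (𝔽 : Type) [Field 𝔽] {n d : ℕ} (A : Subalgebra 𝔽 (Rpoly 𝔽 n d))
    (f : Rpoly 𝔽 n d) : Prop :=
  f ∈ Submodule.span 𝔽
    {x : Rpoly 𝔽 n d | ∃ g ∈ A, ∃ h ∈ A,
      (∃ i, 0 < i ∧ MvPolynomial.IsHomogeneous g i) ∧
      (∃ j, 0 < j ∧ MvPolynomial.IsHomogeneous h j) ∧ x = g * h}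

/-!
Specialize each `X_k⁺` to the diagonal matrix `z_k • diag(𝟙_s + δ_{k k₀} ε e_{i₀})` over
`(𝔽[z_1, …, z_d]/(z_k²))[ε]`, where `s` is a set of `p = char 𝔽` indices containing `i₀`.
Modulo `ε`, a nonempty product of the `X_k⁺` becomes `c • diag(𝟙_s)` with `c² = 0`, so its
`σ_t` vanishes: for `t ≥ 2` because `c^t = 0`, for `t = 1` because `tr diag(𝟙_s) = p = 0`.
Hence `R₊^{O(n)}` is sent into `𝔽 + ε • (…)`, its elements without constant term into
`ε • (…)`, and, as `ε² = 0`, every decomposable element to `0`. But `tr(X₁⁺⋯X_d⁺)` is sent to `z₁⋯z_d (p + ε) = ε z₁⋯z_d`,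
which is not `0`.
-/

open Finset

theorem MvPolynomial.IsHomogeneous.constantCoeff_eq_zero {σ R : Type*} [CommSemiring R]
    {φ : MvPolynomial σ R} {m : ℕ} (hφ : φ.IsHomogeneous m) (hm : m ≠ 0) :
    constantCoeff φ = 0 := by
  rw [constantCoeff_eq]
  exact hφ.coeff_eq_zero (by simpa using hm.symm)

theorem TrivSqZeroExt.mul_eq_zero_of_fst_eq_zero {R M : Type*} [Semiring R] [AddCommMonoid M]
    [Module R M] [Module Rᵐᵒᵖ M] {x y : TrivSqZeroExt R M} (hx : x.fst = 0) (hy : y.fst = 0) :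
    x * y = 0 := by
  ext <;> simp [hx, hy]

section CharpolyDiagonal
variable {R ι : Type*} [CommRing R] [Fintype ι]

theorem Matrix.charpoly_diagonal_coeff_card_sub [DecidableEq ι] (v : ι → R) {t : ℕ}
    (ht : t ≤ Fintype.card ι) :
    (diagonal v).charpoly.coeff (Fintype.card ι - t) =
      (-1) ^ t * ∑ T ∈ univ.powersetCard t, ∏ i ∈ T, v i := by
  open Polynomial in
  have hX : ∀ i, (X - C (v i) : R[X]) = X + C (-v i) := fun i => by rw [C_neg, sub_eq_add_neg]
  rw [charpoly_diagonal, prod_congr rfl fun i _ => hX i, ← card_univ,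
    prod_X_add_C_coeff _ _ (Nat.sub_le _ _), Nat.sub_sub_self (by simpa using ht), mul_sum]
  exact sum_congr rfl fun T hT => by rw [prod_neg, (mem_powersetCard.1 hT).2]

theorem sum_powersetCard_prod_smul_eq_zero {c : R} (hc : c ^ 2 = 0) {E : ι → R}
    (hE : ∑ i, E i = 0) {t : ℕ} (ht : 1 ≤ t) :
    ∑ T ∈ univ.powersetCard t, ∏ i ∈ T, (c • E) i = 0 := by
  obtain rfl | ht := ht.eq_or_lt
  · simp [powersetCard_one, ← mul_sum, hE]
  · refine sum_eq_zero fun T hT => ?_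
    simp only [Pi.smul_apply, smul_eq_mul, prod_mul_distrib, prod_const,
      (mem_powersetCard.1 hT).2, pow_eq_zero_of_le ht hc, zero_mul]

end CharpolyDiagonal

section SqZeroMvPoly
open MvPolynomial
variable (K σ : Type*) [CommRing K]

abbrev SqZeroMvPoly : Type _ :=
  MvPolynomial σ K ⧸ Ideal.span (Set.range fun i : σ => (X i : MvPolynomial σ K) ^ 2)

namespace SqZeroMvPoly
variable {K σ}

def z (i : σ) : SqZeroMvPoly K σ := Ideal.Quotient.mk _ (X i)

theorem z_sq (i : σ) : z i ^ 2 = (0 : SqZeroMvPoly K σ) := by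
  rw [z, ← map_pow, Ideal.Quotient.eq_zero_iff_mem]
  exact Ideal.subset_span ⟨i, rfl⟩

theorem prod_z_ne_zero [Fintype σ] [Nontrivial K] : ∏ i, z i ≠ (0 : SqZeroMvPoly K σ) := by
  have hspan : Set.range (fun i : σ => (X i : MvPolynomial σ K) ^ 2) =
      (fun s => monomial s (1 : K)) '' Set.range fun i => Finsupp.single i 2 := by
    rw [← Set.range_comp]
    simp [Function.comp_def, X_pow_eq_monomial]
  have hprod : ∏ i, (X i : MvPolynomial σ K) = monomial (∑ i, Finsupp.single i 1) 1 := by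
    simp [monomial_sum_one, X]
  unfold z
  rw [← map_prod, Ne, Ideal.Quotient.eq_zero_iff_mem, hspan, mem_ideal_span_monomial_image,
    hprod]
  intro h
  obtain ⟨_, ⟨i, rfl⟩, hle⟩ :=
    h (∑ i, Finsupp.single i 1) (by classical simp [mem_support_iff, coeff_monomial])
  simpa using hle i

def augmentation : SqZeroMvPoly K σ →ₐ[K] K :=
  Ideal.Quotient.liftₐ _ (aeval 0) fun _ hx => by
    refine (Ideal.span_le (I := RingHom.ker (aeval (R := K) (0 : σ → K)))).2 ?_ hx
    rintro _ ⟨i, rfl⟩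
    simp

theorem augmentation_z (i : σ) : augmentation (z i : SqZeroMvPoly K σ) = 0 := by
  change aeval (0 : σ → K) (X i) = 0
  simp

end SqZeroMvPoly
end SqZeroMvPoly

section DiagSpecialization
open MvPolynomial
variable (𝔽 : Type) [Field 𝔽] {n d : ℕ} {S : Type*} [CommRing S] [Algebra 𝔽 S]

def diagSpecialization (v : Fin d → Fin n → S) : Rpoly 𝔽 n d →ₐ[𝔽] S :=
  aeval fun x => if x.1 = x.2.1 then v x.2.2 x.1 else 0

variable {𝔽}

theorem mapMatrix_diagSpecialization_XgenSym (v : Fin d → Fin n → S) (k : Fin d) :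
    (diagSpecialization 𝔽 v).mapMatrix (XgenSym 𝔽 n d k) = diagonal (v k) := by
  ext i j
  by_cases hij : i = j
  · subst hij
    simp [XgenSym, diagSpecialization]
  · simp only [XgenSym, diagSpecialization, AlgHom.mapMatrix_apply, map_apply,
      diagonal_apply_ne _ hij]
    split_ifs <;> simp [hij, Ne.symm hij]

theorem map_sigmaCoeff_of_mapMatrix_eq_diagonal (f : Rpoly 𝔽 n d →ₐ[𝔽] S)
    {A : Matrix (Fin n) (Fin n) (Rpoly 𝔽 n d)} {w : Fin n → S} (hA : f.mapMatrix A = diagonal w)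
    {t : ℕ} (ht : t ≤ n) :
    f (sigmaCoeff t A) = ∑ T ∈ univ.powersetCard t, ∏ i ∈ T, w i := by
  have hcoeff : f (A.charpoly.coeff (n - t)) = (diagonal w).charpoly.coeff (n - t) := by
    rw [← hA, AlgHom.mapMatrix_apply, ← AlgHom.coe_toRingHom, charpoly_map, Polynomial.coeff_map]
  have hdiag := charpoly_diagonal_coeff_card_sub w (ht.trans_eq (Fintype.card_fin n).symm)
  rw [Fintype.card_fin] at hdiag
  rw [sigmaCoeff, map_mul, map_pow, map_neg, map_one, hcoeff, hdiag, ← mul_assoc, ← mul_pow]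
  simp

theorem diagSpecialization_trace_prod_XgenSym (v : Fin d → Fin n → S) :
    diagSpecialization 𝔽 v (trace (List.ofFn (XgenSym 𝔽 n d)).prod) = ∑ i, ∏ k, v k i := by
  have hdiag : (diagSpecialization 𝔽 v).mapMatrix ∘ XgenSym 𝔽 n d =
      diagonalRingHom (Fin n) S ∘ v :=
    funext (mapMatrix_diagSpecialization_XgenSym v)
  rw [AddMonoidHom.map_trace, ← AlgHom.mapMatrix_apply, map_list_prod, List.map_ofFn, hdiag,
    ← List.map_ofFn, ← map_list_prod, List.prod_ofFn]
  simp [prod_apply]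

end DiagSpecialization
section DualSpecialization
open MvPolynomial TrivSqZeroExt SqZeroMvPoly
open scoped DualNumber
variable (𝔽 : Type) [Field 𝔽] {n d : ℕ}

def dualSpecialization (s : Finset (Fin n)) (i₀ : Fin n) (k₀ : Fin d) :
    Rpoly 𝔽 n d →ₐ[𝔽] DualNumber (SqZeroMvPoly 𝔽 (Fin d)) :=
  diagSpecialization 𝔽 fun k i =>
    (inl (z k) : DualNumber (SqZeroMvPoly 𝔽 (Fin d))) *
      ((if i ∈ s then 1 else 0) + if k = k₀ ∧ i = i₀ then ε else 0)

variable {𝔽} (s : Finset (Fin n)) (i₀ : Fin n) (k₀ : Fin d)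

theorem fstHom_comp_dualSpecialization :
    (fstHom 𝔽 _ _).comp (dualSpecialization 𝔽 s i₀ k₀) =
      diagSpecialization 𝔽 fun k =>
        (z k : SqZeroMvPoly 𝔽 (Fin d)) • fun i => if i ∈ s then 1 else 0 := by
  refine algHom_ext fun x => ?_
  simp only [dualSpecialization, diagSpecialization, AlgHom.comp_apply, aeval_X]
  split_ifs <;> simp_all

theorem fst_dualSpecialization_sigmaCoeff_eq_zero (hs : (#s : 𝔽) = 0)
    {w : List (Matrix (Fin n) (Fin n) (Rpoly 𝔽 n d))} (hw : w ≠ [])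
    (hX : ∀ m ∈ w, ∃ k, m = XgenSym 𝔽 n d k) {t : ℕ} (ht1 : 1 ≤ t) (htn : t ≤ n) :
    (dualSpecialization 𝔽 s i₀ k₀ (sigmaCoeff t w.prod)).fst = 0 := by
  set E : Fin n → SqZeroMvPoly 𝔽 (Fin d) := fun i => if i ∈ s then 1 else 0
  have hE : E * E = E := funext fun i => by by_cases hi : i ∈ s <;> simp [E, hi]
  set ψ₀ := diagSpecialization 𝔽 fun k => (z k : SqZeroMvPoly 𝔽 (Fin d)) • E
  obtain ⟨c, hc, hprod⟩ : ∃ c : SqZeroMvPoly 𝔽 (Fin d), c ^ 2 = 0 ∧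
      ψ₀.mapMatrix w.prod = diagonal (c • E) := by
    refine List.prod_induction_nonempty
      (fun A => ∃ c : SqZeroMvPoly 𝔽 (Fin d), c ^ 2 = 0 ∧ ψ₀.mapMatrix A = diagonal (c • E))
      ?_ hw fun m hm => ?_
    · rintro A B ⟨a, ha, hA⟩ ⟨b, hb, hB⟩
      refine ⟨a * b, by rw [mul_pow, ha, zero_mul], ?_⟩
      rw [map_mul, hA, hB, diagonal_mul_diagonal', ← Pi.mul_def, smul_mul_smul_comm, hE]
    · obtain ⟨k, rfl⟩ := hX m hm
      exact ⟨z k, z_sq k, mapMatrix_diagSpecialization_XgenSym _ k⟩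
  have hsum : ∑ i, E i = 0 := by
    simp [E, ← map_natCast (algebraMap 𝔽 (SqZeroMvPoly 𝔽 (Fin d))), hs]
  rw [← fstHom_apply 𝔽, ← AlgHom.comp_apply, fstHom_comp_dualSpecialization,
    map_sigmaCoeff_of_mapMatrix_eq_diagonal _ hprod htn]
  exact sum_powersetCard_prod_smul_eq_zero hc hsum ht1

theorem invOplus_le_comap_bot (hs : (#s : 𝔽) = 0) :
    invOplus 𝔽 n d ≤ (⊥ : Subalgebra 𝔽 (SqZeroMvPoly 𝔽 (Fin d))).comap
      ((fstHom 𝔽 _ _).comp (dualSpecialization 𝔽 s i₀ k₀)) := by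
  refine Algebra.adjoin_le ?_
  rintro _ ⟨t, ht1, htn, w, hw, hX, rfl⟩
  rw [SetLike.mem_coe, Subalgebra.mem_comap, AlgHom.comp_apply, fstHom_apply,
    fst_dualSpecialization_sigmaCoeff_eq_zero s i₀ k₀ hs hw hX ht1 htn]
  exact zero_mem _

theorem augmentation_comp_fstHom_comp_dualSpecialization :
    augmentation.comp ((fstHom 𝔽 _ _).comp (dualSpecialization 𝔽 s i₀ k₀)) = aeval 0 := by
  refine algHom_ext fun x => ?_
  rw [fstHom_comp_dualSpecialization]
  simp only [AlgHom.comp_apply, diagSpecialization, aeval_X, Pi.smul_apply, smul_eq_mul]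
  split_ifs <;> simp only [map_mul, augmentation_z, zero_mul, map_zero, Pi.zero_apply]

theorem fst_dualSpecialization_eq_zero (hs : (#s : 𝔽) = 0) {g : Rpoly 𝔽 n d}
    (hg : g ∈ invOplus 𝔽 n d) (hg0 : constantCoeff g = 0) :
    (dualSpecialization 𝔽 s i₀ k₀ g).fst = 0 := by
  obtain ⟨c, hc⟩ : (dualSpecialization 𝔽 s i₀ k₀ g).fst ∈ Set.range (algebraMap 𝔽 _) :=
    Algebra.mem_bot.1 (invOplus_le_comap_bot s i₀ k₀ hs hg)
  have hc0 : c = 0 := by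
    simpa [← hc, hg0] using
      congrArg (fun φ : Rpoly 𝔽 n d →ₐ[𝔽] 𝔽 => φ g)
        (augmentation_comp_fstHom_comp_dualSpecialization s i₀ k₀)
  simpa [hc0] using hc.symm

theorem dualSpecialization_eq_zero_of_decomposable (hs : (#s : 𝔽) = 0) {f : Rpoly 𝔽 n d}
    (hf : Decomposable 𝔽 (invOplus 𝔽 n d) f) : dualSpecialization 𝔽 s i₀ k₀ f = 0 := by
  refine (Submodule.span_le (p := LinearMap.ker (dualSpecialization 𝔽 s i₀ k₀).toLinearMap)).2
    ?_ hf
  rintro _ ⟨g, hg, h, hh, ⟨i, hi, hgi⟩, ⟨j, hj, hhj⟩, rfl⟩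
  rw [SetLike.mem_coe, LinearMap.mem_ker, AlgHom.toLinearMap_apply, map_mul]
  exact mul_eq_zero_of_fst_eq_zero
    (fst_dualSpecialization_eq_zero s i₀ k₀ hs hg (hgi.constantCoeff_eq_zero hi.ne'))
    (fst_dualSpecialization_eq_zero s i₀ k₀ hs hh (hhj.constantCoeff_eq_zero hj.ne'))

theorem dualSpecialization_trace_prod_XgenSym (hs : (#s : 𝔽) = 0) (hi₀ : i₀ ∈ s) :
    dualSpecialization 𝔽 s i₀ k₀ (trace (List.ofFn (XgenSym 𝔽 n d)).prod) =
      inr (∏ k, z k) := by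
  have hprod (i : Fin n) :
      ∏ k, ((if i ∈ s then 1 else 0) + if k = k₀ ∧ i = i₀ then ε else 0) =
        (if i ∈ s then 1 else 0) +
          if i = i₀ then (ε : DualNumber (SqZeroMvPoly 𝔽 (Fin d))) else 0 := by
    by_cases hi : i = i₀
    · subst hi
      simp only [hi₀, if_true, and_true]
      rw [prod_congr rfl fun k _ => (apply_ite (1 + ·) _ _ _), add_zero, prod_ite_eq']
      simp
    · by_cases his : i ∈ s
      · simp [hi, his]
      · simp [hi, his, zero_pow (Fin.pos k₀).ne']
  have hcard : ((#s : ℕ) : DualNumber (SqZeroMvPoly 𝔽 (Fin d))) = 0 := by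
    rw [← map_natCast (algebraMap 𝔽 _), hs, map_zero]
  rw [dualSpecialization, diagSpecialization_trace_prod_XgenSym]
  simp only [prod_mul_distrib, ← mul_sum, hprod, sum_add_distrib, sum_boole, filter_mem_eq_inter,
    univ_inter, hcard, sum_ite_eq', mem_univ, if_true, zero_add]
  have hinl : ∏ k, (inl (z k) : DualNumber (SqZeroMvPoly 𝔽 (Fin d))) = inl (∏ k, z k) :=
    (map_prod (inlHom _ _) _ _).symm
  rw [DualNumber.eps, hinl, inl_mul_inr, smul_eq_mul, mul_one]

end DualSpecialization

theorem trace_prod_sym_indecomposable_general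
    (𝔽 : Type) [Field 𝔽] (n d : ℕ) (hd : 1 ≤ d)
    (hp0 : 0 < ringChar 𝔽) (hpn : ringChar 𝔽 ≤ n) :
    ¬ Decomposable 𝔽 (invOplus 𝔽 n d)
      (Matrix.trace (List.ofFn (fun k : Fin d => XgenSym 𝔽 n d k)).prod) := by
  intro hdec
  obtain ⟨s, -, hs⟩ := (univ : Finset (Fin n)).exists_subset_card_eq (by simpa using hpn)
  obtain ⟨i₀, hi₀⟩ : s.Nonempty := card_pos.1 (hs ▸ hp0)
  have hs0 : (#s : 𝔽) = 0 := hs ▸ ringChar.Nat.cast_ringChar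
  have htrace := dualSpecialization_eq_zero_of_decomposable s i₀ ⟨0, hd⟩ hs0 hdec
  rw [dualSpecialization_trace_prod_XgenSym s i₀ _ hs0 hi₀] at htrace
  exact SqZeroMvPoly.prod_z_ne_zero (by simpa using congrArg TrivSqZeroExt.snd htrace)

theorem trace_prod_sym_indecomposable
    (𝔽 : Type) [Field 𝔽] [Infinite 𝔽] (n d : ℕ) (hn : 2 ≤ n) (hd : 1 ≤ d)
    (hp0 : 0 < ringChar 𝔽) (hpn : ringChar 𝔽 ≤ n) (hp2 : ringChar 𝔽 ≠ 2) :
    ¬ Decomposable 𝔽 (invOplus 𝔽 n d)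
      (Matrix.trace (List.ofFn (fun k : Fin d => XgenSym 𝔽 n d k)).prod) :=
  trace_prod_sym_indecomposable_general 𝔽 n d hd hp0 hpn

end
end

section
/- Let 𝔽 be an infinite field of characteristic p with 0 < p ≤ n and p ≠ 2, and let d ≥ 1. Suppose coefficients α_{σ,δ} ∈ 𝔽 are given for each permutation σ ∈ S_d and each tuple δ = (δ₁,…,δ_d) ∈ {1,T}^d, and suppose that the linear combination Σ_{σ,δ} α_{σ,δ} · tr(X_{σ(1)}^{δ₁} ⋯ X_{σ(d)}^{δ_d}) is decomposable in R^{O(n)} (i.e., lies in the 𝔽-span of products g·h with g, h ∈ R^{O(n)} homogeneous of positive degree). Then the sum of all coefficients is zero: Σ_{σ,δ} α_{σ,δ} = 0. -/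
open Matrix
noncomputable section

/-!
Substitute `y_k • D_k` for the generic matrix `X_k`, where the `y_k` are new variables and the
`D_k` are diagonal: `D_{k₀} = E_{i₀ i₀}` and, for `k ≠ k₀`, `D_k` is the projection onto a set `P`
of coordinates with `i₀ ∈ P` and `#P = 0` in `𝔽` (possible as `0 < char 𝔽 ≤ n`). Transposes become
invisible, and every trace word using each `X_k` exactly once is sent to `y_1 ⋯ y_d`.

A generator `σ_t(A)`, `A` a word in the `X_k, X_kᵀ`, is sent to `y^{t·deg A} · e_t(diagonal)`.
Unless this monomial is divisible by `y_{k₀}` or by some `y_k²`, we have `t = 1` and `A` avoids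
`X_{k₀}`, so `A` becomes a multiple of the projection onto `P`, of trace `#P = 0`. Hence
invariants without constant term land in the ideal `J = (y_{k₀}, y_k²)`, and decomposable
elements in `J² ⊆ (y_k²)`, which has no `y_1 ⋯ y_d` term. Comparing coefficients of `y_1 ⋯ y_d`
gives `∑ α = 0`.
-/

theorem Ideal.mem_of_mem_adjoin_of_augmentation_eq_zero {R A : Type*} [CommRing R] [CommRing A]
    [Algebra R A] (ε : A →ₐ[R] R) {J : Ideal A} (hJ : J ≤ RingHom.ker ε) {T : Set A}
    (hT : T ⊆ J) {x : A} (hx : x ∈ Algebra.adjoin R T) (hεx : ε x = 0) : x ∈ J := by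
  have hbot : Algebra.adjoin R T ≤ (⊥ : Subalgebra R (A ⧸ J)).comap (Ideal.Quotient.mkₐ R J) :=
    Algebra.adjoin_le fun t ht => ⟨0, by simp [Ideal.Quotient.eq_zero_iff_mem.mpr (hT ht)]⟩
  obtain ⟨c, hc⟩ := hbot hx
  have hxc : x - algebraMap R A c ∈ J := by
    rw [← Ideal.Quotient.eq]
    simpa using hc.symm
  have hc0 : c = 0 := by simpa [hεx] using hJ hxc
  simpa [hc0] using hxc

namespace MvPolynomial

variable {σ R : Type*} [CommSemiring R]

theorem coeff_sum_single_one_eq_zero_of_mem_span_X_sq [Fintype σ] {f : MvPolynomial σ R}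
    (hf : f ∈ Ideal.span (Set.range fun k => (X k : MvPolynomial σ R) ^ 2)) :
    coeff (∑ k, Finsupp.single k 1 : σ →₀ ℕ) f = 0 := by
  obtain ⟨c, rfl⟩ := Ideal.mem_span_range_iff_exists_fun.mp hf
  rw [coeff_sum]
  refine Finset.sum_eq_zero fun k _ => ?_
  rw [X_pow_eq_monomial, coeff_mul_monomial', if_neg]
  intro h
  simpa [Finsupp.single_apply] using h k

theorem span_insert_X_mul_self_le_span_X_sq (k₀ : σ) :
    Ideal.span (insert (X k₀) (Set.range fun k => (X k : MvPolynomial σ R) ^ 2)) *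
        Ideal.span (insert (X k₀) (Set.range fun k => X k ^ 2)) ≤
      Ideal.span (Set.range fun k => X k ^ 2) := by
  rw [Ideal.span_mul_span', Ideal.span_le]
  rintro _ ⟨a, ha, b, hb, rfl⟩
  rcases ha with rfl | ⟨k, rfl⟩
  · rcases hb with rfl | ⟨k, rfl⟩
    · exact Ideal.subset_span ⟨k₀, sq _⟩
    · exact Ideal.mul_mem_left _ _ (Ideal.subset_span ⟨k, rfl⟩)
  · exact Ideal.mul_mem_right _ _ (Ideal.subset_span ⟨k, rfl⟩)

end MvPolynomial

theorem Matrix.neg_one_pow_mul_charpoly_diagonal_coeff {R : Type*} [CommRing R] {n : ℕ}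
    (v : Fin n → R) {t : ℕ} (ht : t ≤ n) :
    (-1) ^ t * (diagonal v).charpoly.coeff (n - t) = (Finset.univ.val.map v).esymm t := by
  have hprod : ∏ i, (Polynomial.X - Polynomial.C (v i)) =
      ((Finset.univ.val.map v).map fun r => Polynomial.X - Polynomial.C r).prod := by
    rw [Multiset.map_map]; rfl
  rw [charpoly_diagonal, hprod, Multiset.prod_X_sub_C_coeff _ (by simp)]
  simp [Nat.sub_sub_self ht, ← mul_assoc, ← mul_pow]

theorem Multiset.esymm_one {R : Type*} [CommSemiring R] (s : Multiset R) : s.esymm 1 = s.sum := by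
  simp [Multiset.esymm, Multiset.powersetCard_one]

namespace OrthogonalInvariants

open MvPolynomial Matrix Finset

variable {𝔽 : Type} [Field 𝔽] {n d : ℕ}

theorem map_sigmaCoeff {S : Type*} [CommRing S] (f : Rpoly 𝔽 n d →+* S) (t : ℕ)
    (A : Matrix (Fin n) (Fin n) (Rpoly 𝔽 n d)) :
    f (sigmaCoeff t A) = (-1) ^ t * (A.map f).charpoly.coeff (n - t) := by
  rw [sigmaCoeff, map_mul, map_pow, map_neg, map_one, charpoly_map, Polynomial.coeff_map]

variable (𝔽 n) in
def genMatrix (kb : Fin d × Bool) : Matrix (Fin n) (Fin n) (Rpoly 𝔽 n d) :=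
  if kb.2 then (Xgen 𝔽 n d kb.1)ᵀ else Xgen 𝔽 n d kb.1

theorem exists_map_genMatrix_eq {w : List (Matrix (Fin n) (Fin n) (Rpoly 𝔽 n d))}
    (hw : ∀ m ∈ w, (∃ k, m = Xgen 𝔽 n d k) ∨ (∃ k, m = (Xgen 𝔽 n d k)ᵀ)) :
    ∃ l : List (Fin d × Bool), l.map (genMatrix 𝔽 n) = w := by
  induction w with
  | nil => exact ⟨[], rfl⟩
  | cons m w ih =>
    obtain ⟨l, rfl⟩ := ih fun x hx => hw x (List.mem_cons_of_mem m hx)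
    rcases hw m List.mem_cons_self with ⟨k, rfl⟩ | ⟨k, rfl⟩
    · exact ⟨(k, false) :: l, rfl⟩
    · exact ⟨(k, true) :: l, rfl⟩

/-- Substitutes `y_k • diagonal (w k)` for the generic matrix `X_k`. -/
def diagSubst (w : Fin d → Fin n → 𝔽) : Rpoly 𝔽 n d →ₐ[𝔽] MvPolynomial (Fin d) 𝔽 :=
  aeval fun q => if q.1 = q.2.1 then X q.2.2 * C (w q.2.2 q.1) else 0

theorem map_genMatrix_diagSubst (w : Fin d → Fin n → 𝔽) (kb : Fin d × Bool) :
    (genMatrix 𝔽 n kb).map (diagSubst w) = diagonal fun i => X kb.1 * C (w kb.1 i) := by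
  obtain ⟨k, _ | _⟩ := kb <;> ext i j <;> rcases eq_or_ne i j with rfl | hij <;>
    simp [genMatrix, Xgen, diagSubst, *, Ne.symm]

theorem map_prod_genMatrix_diagSubst (w : Fin d → Fin n → 𝔽) (l : List (Fin d × Bool)) :
    (l.map (genMatrix 𝔽 n)).prod.map (diagSubst w) =
      diagonal fun i => (l.map fun kb => X kb.1).prod * C (l.map fun kb => w kb.1 i).prod := by
  induction l with
  | nil => simp
  | cons kb l ih =>
    rw [List.map_cons, List.prod_cons, Matrix.map_mul, ih, map_genMatrix_diagSubst,
      diagonal_mul_diagonal]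
    simp [mul_mul_mul_comm]

theorem diagSubst_sigmaCoeff_prod_genMatrix (w : Fin d → Fin n → 𝔽) {t : ℕ} (ht : t ≤ n)
    (l : List (Fin d × Bool)) :
    diagSubst w (sigmaCoeff t (l.map (genMatrix 𝔽 n)).prod) =
      (l.map fun kb => X kb.1).prod ^ t *
        (univ.val.map fun i => C (l.map fun kb => w kb.1 i).prod).esymm t := by
  rw [← AlgHom.coe_toRingHom, map_sigmaCoeff, AlgHom.coe_toRingHom, map_prod_genMatrix_diagSubst,
    neg_one_pow_mul_charpoly_diagonal_coeff _ ht, ← smul_eq_mul, Multiset.pow_smul_esymm,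
    Multiset.map_map]
  rfl

theorem diagSubst_trace_prod_genMatrix (w : Fin d → Fin n → 𝔽) (l : List (Fin d × Bool)) :
    diagSubst w (trace (l.map (genMatrix 𝔽 n)).prod) =
      (l.map fun kb => X kb.1).prod * C (∑ i, (l.map fun kb => w kb.1 i).prod) := by
  rw [AddMonoidHom.map_trace, map_prod_genMatrix_diagSubst, trace_diagonal, map_sum, mul_sum]

def testWeight (k₀ : Fin d) (i₀ : Fin n) (P : Finset (Fin n)) (k : Fin d) (i : Fin n) : 𝔽 :=
  if k = k₀ then (if i = i₀ then 1 else 0) else (if i ∈ P then 1 else 0)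

variable {k₀ : Fin d} {i₀ : Fin n} {P : Finset (Fin n)}

theorem prod_testWeight_of_forall_ne {l : List (Fin d × Bool)} (hl : l ≠ [])
    (hk₀ : ∀ kb ∈ l, kb.1 ≠ k₀) (i : Fin n) :
    (l.map fun kb => testWeight k₀ i₀ P kb.1 i).prod = if i ∈ P then (1 : 𝔽) else 0 := by
  have h : ∀ kb ∈ l, testWeight k₀ i₀ P kb.1 i = if i ∈ P then (1 : 𝔽) else 0 :=
    fun kb hkb => if_neg (hk₀ kb hkb)
  rw [List.map_congr_left h, List.map_const', List.prod_replicate, ite_pow, one_pow,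
    zero_pow (mt List.length_eq_zero_iff.mp hl)]

theorem prod_ofFn_testWeight (hi₀ : i₀ ∈ P) (σ : Equiv.Perm (Fin d)) (δ : Fin d → Bool)
    (i : Fin n) :
    ((List.ofFn fun j => (σ j, δ j)).map fun kb => testWeight k₀ i₀ P kb.1 i).prod =
      if i = i₀ then (1 : 𝔽) else 0 := by
  rw [List.map_ofFn, List.prod_ofFn]
  refine (Equiv.prod_comp σ fun k => testWeight k₀ i₀ P k i).trans ?_
  split_ifs with hi
  · exact prod_eq_one fun k _ => by simp [testWeight, hi, hi₀]
  · exact prod_eq_zero (mem_univ k₀) (by simp [testWeight, hi])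

theorem diagSubst_sigmaCoeff_prod_genMatrix_mem (hP : (#P : 𝔽) = 0) {t : ℕ} (ht : 1 ≤ t)
    (htn : t ≤ n) {l : List (Fin d × Bool)} (hl : l ≠ []) :
    diagSubst (testWeight k₀ i₀ P) (sigmaCoeff t (l.map (genMatrix 𝔽 n)).prod) ∈
      Ideal.span (insert (X k₀) (Set.range fun k => X k ^ 2)) := by
  rw [diagSubst_sigmaCoeff_prod_genMatrix _ htn]
  rcases ht.lt_or_eq with ht2 | rfl
  · obtain ⟨kb, l, rfl⟩ := List.exists_cons_of_ne_nil hl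
    refine Ideal.mul_mem_right _ _ (Ideal.mem_of_dvd _ ?_
      (Ideal.subset_span (Set.mem_insert_of_mem _ ⟨kb.1, rfl⟩)))
    exact (pow_dvd_pow _ ht2).trans (pow_dvd_pow_of_dvd (by simp) t)
  · by_cases hk₀ : ∃ kb ∈ l, kb.1 = k₀
    · obtain ⟨kb, hkb, rfl⟩ := hk₀
      refine Ideal.mul_mem_right _ _
        (Ideal.mem_of_dvd _ ?_ (Ideal.subset_span (Set.mem_insert _ _)))
      rw [pow_one]
      exact List.dvd_prod (List.mem_map_of_mem hkb)
    · push Not at hk₀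
      rw [Multiset.esymm_one, Finset.sum_map_val, ← map_sum,
        sum_congr rfl fun i _ => prod_testWeight_of_forall_ne hl hk₀ i, sum_boole]
      simp [hP]

theorem aeval_zero_diagSubst (w : Fin d → Fin n → 𝔽) (g : Rpoly 𝔽 n d) :
    aeval (0 : Fin d → 𝔽) (diagSubst w g) = aeval 0 g := by
  have h : (aeval (0 : Fin d → 𝔽)).comp (diagSubst w) = aeval 0 := algHom_ext fun q => by
    simp only [AlgHom.comp_apply, diagSubst, aeval_X]
    split_ifs <;> simp
  exact AlgHom.congr_fun h g

theorem diagSubst_mem_of_mem_invO (hP : (#P : 𝔽) = 0) {g : Rpoly 𝔽 n d} (hg : g ∈ invO 𝔽 n d)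
    (hg0 : constantCoeff g = 0) :
    diagSubst (testWeight k₀ i₀ P) g ∈
      Ideal.span (insert (X k₀) (Set.range fun k => X k ^ 2)) := by
  refine Ideal.mem_of_mem_adjoin_of_augmentation_eq_zero (aeval 0) ?_ (T := diagSubst _ '' _) ?_
    (by rw [Algebra.adjoin_image]; exact ⟨g, hg, rfl⟩)
    (by rw [aeval_zero_diagSubst, aeval_zero, hg0, map_zero])
  · rw [Ideal.span_le]
    rintro _ (rfl | ⟨k, rfl⟩) <;> simp
  · rintro _ ⟨f, ⟨t, ht1, htn, w, hw0, hw, rfl⟩, rfl⟩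
    obtain ⟨l, rfl⟩ := exists_map_genMatrix_eq hw
    exact diagSubst_sigmaCoeff_prod_genMatrix_mem hP ht1 htn (by rintro rfl; exact hw0 rfl)

theorem coeff_diagSubst_eq_zero_of_decomposable (hP : (#P : 𝔽) = 0) {f : Rpoly 𝔽 n d}
    (hf : Decomposable 𝔽 (invO 𝔽 n d) f) :
    coeff (∑ k, Finsupp.single k 1) (diagSubst (testWeight k₀ i₀ P) f) = 0 := by
  refine (Submodule.span_le (p := LinearMap.ker
    ((lcoeff 𝔽 _).comp (diagSubst (testWeight k₀ i₀ P)).toLinearMap))).mpr ?_ hf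
  rintro _ ⟨g, hg, h, hh, ⟨i, hi, hgi⟩, ⟨j, hj, hhj⟩, rfl⟩
  have hg0 : constantCoeff g = 0 := hgi.coeff_eq_zero (by simpa using hi.ne)
  have hh0 : constantCoeff h = 0 := hhj.coeff_eq_zero (by simpa using hj.ne)
  exact coeff_sum_single_one_eq_zero_of_mem_span_X_sq (span_insert_X_mul_self_le_span_X_sq k₀
    (map_mul (diagSubst _) g h ▸ Ideal.mul_mem_mul (diagSubst_mem_of_mem_invO hP hg hg0)
      (diagSubst_mem_of_mem_invO hP hh hh0)))

theorem coeff_diagSubst_trace_ofFn (hi₀ : i₀ ∈ P) (σ : Equiv.Perm (Fin d)) (δ : Fin d → Bool) :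
    coeff (∑ k, Finsupp.single k 1) (diagSubst (testWeight k₀ i₀ P)
      (trace (List.ofFn fun i => if δ i then (Xgen 𝔽 n d (σ i))ᵀ else Xgen 𝔽 n d (σ i)).prod)) =
      1 := by
  have hword : (List.ofFn fun i => if δ i then (Xgen 𝔽 n d (σ i))ᵀ else Xgen 𝔽 n d (σ i)) =
      (List.ofFn fun i => (σ i, δ i)).map (genMatrix 𝔽 n) := by
    rw [List.map_ofFn]; rfl
  have hX : ((List.ofFn fun i => (σ i, δ i)).map
      fun kb => (X kb.1 : MvPolynomial (Fin d) 𝔽)).prod =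
      monomial (∑ k, Finsupp.single k 1) 1 := by
    rw [List.map_ofFn, List.prod_ofFn, monomial_sum_one]
    exact Equiv.prod_comp σ X
  rw [hword, diagSubst_trace_prod_genMatrix, hX]
  simp only [prod_ofFn_testWeight hi₀]
  simp

end OrthogonalInvariants

open OrthogonalInvariants MvPolynomial Finset

theorem sum_coeffs_eq_zero_of_decomposable_general
    (𝔽 : Type) [Field 𝔽] (n d : ℕ) (hd : 1 ≤ d)
    (hp0 : 0 < ringChar 𝔽) (hpn : ringChar 𝔽 ≤ n)
    (α : Equiv.Perm (Fin d) → (Fin d → Bool) → 𝔽)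
    (hdec : Decomposable 𝔽 (invO 𝔽 n d)
      (∑ σ : Equiv.Perm (Fin d), ∑ δ : Fin d → Bool, α σ δ •
        Matrix.trace (List.ofFn (fun i : Fin d =>
          if δ i then (Xgen 𝔽 n d (σ i))ᵀ else Xgen 𝔽 n d (σ i))).prod)) :
    ∑ σ : Equiv.Perm (Fin d), ∑ δ : Fin d → Bool, α σ δ = 0 := by
  obtain ⟨P, hP, i₀, hi₀⟩ : ∃ P : Finset (Fin n), (#P : 𝔽) = 0 ∧ ∃ i₀, i₀ ∈ P :=
    ⟨univ.map (Fin.castLEEmb hpn), by simp, _, mem_map_of_mem _ (mem_univ ⟨0, hp0⟩)⟩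
  have h := coeff_diagSubst_eq_zero_of_decomposable (k₀ := ⟨0, hd⟩) (i₀ := i₀) hP hdec
  simpa [coeff_sum, coeff_diagSubst_trace_ofFn hi₀] using h

theorem sum_coeffs_eq_zero_of_decomposable
    (𝔽 : Type) [Field 𝔽] [Infinite 𝔽] (n d : ℕ) (hn : 2 ≤ n) (hd : 1 ≤ d)
    (hp0 : 0 < ringChar 𝔽) (hpn : ringChar 𝔽 ≤ n) (hp2 : ringChar 𝔽 ≠ 2)
    (α : Equiv.Perm (Fin d) → (Fin d → Bool) → 𝔽)
    (hdec : Decomposable 𝔽 (invO 𝔽 n d)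
      (∑ σ : Equiv.Perm (Fin d), ∑ δ : Fin d → Bool, α σ δ •
        Matrix.trace (List.ofFn (fun i : Fin d =>
          if δ i then (Xgen 𝔽 n d (σ i))ᵀ else Xgen 𝔽 n d (σ i))).prod)) :
    ∑ σ : Equiv.Perm (Fin d), ∑ δ : Fin d → Bool, α σ δ = 0 :=
  sum_coeffs_eq_zero_of_decomposable_general 𝔽 n d hd hp0 hpn α hdec

end
end

section
/- Let 𝔽 be an infinite field of characteristic p with 0 < p ≤ n and p ≠ 2, and let d ≥ 1. Then every multilinear trace invariant tr(Y_{σ(1)} ⋯ Y_{σ(d)}), where σ ∈ S_d and each Y_i is either X_i or X_iᵀ, is indecomposable in R^{O(n)}; that is, it does not lie in the 𝔽-span of products g·h with g, h ∈ R^{O(n)} homogeneous of positive degree. -/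
open Matrix
noncomputable section

/-!
Let `p = char 𝔽` and let `P` be the diagonal projection onto the first `p` coordinates: it is
symmetric and idempotent with trace `p = 0`. Let `E = E₁₁`, let `X_{k₀}` be the first letter of the
word and substitute `X_{k₀} ↦ y_{k₀} P + z E` and `X_k ↦ y_k P` for `k ≠ k₀`. The target monomial is
`z y^N`, where `y^N` is the product of the `y_k` over the remaining letters, and `I` is the ideal
spanned by the monomials not dividing `y^N`.

Modulo `I` we have `z = 0` and `y_k² = 0`, so every `X_k` and `X_kᵀ` becomes `y_k P`, and a
nonempty product of them becomes `u P` with `u² = 0`. Hence `σ_t(u P) = u^t σ_t(P)` vanishes: for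
`t ≥ 2` because `u² = 0`, for `t = 1` because `tr P = 0`. So every invariant is sent into `𝔽 + I`,
a homogeneous one of positive degree into `I`, and a product of two elements of `I` has no `z y^N`
term, since one factor must contribute `z⁰`. But the multilinear trace is sent exactly to `z y^N`:
`tr ((y_{k₀} P + z E) u P) = u (y_{k₀} tr P + z tr E) = z u`.
-/

open MvPolynomial

namespace MvPolynomial

variable {σ R : Type*} [CommSemiring R]

theorem coeff_eq_zero_of_mem_span_monomial_not_le {N m : σ →₀ ℕ} {f : MvPolynomial σ R}
    (hf : f ∈ Ideal.span ((fun s => monomial s (1 : R)) '' {s | ¬ s ≤ N})) (hm : m ≤ N) :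
    coeff m f = 0 := by
  by_contra h
  obtain ⟨s, hsN, hsm⟩ := mem_ideal_span_monomial_image.mp hf m (mem_support_iff.mpr h)
  exact hsN (hsm.trans hm)

theorem coeff_single_add_mul_eq_zero {N : σ →₀ ℕ} {i : σ} (hNi : N i = 0)
    {f g : MvPolynomial σ R} (hf : ∀ m ≤ N, coeff m f = 0) (hg : ∀ m ≤ N, coeff m g = 0) :
    coeff (Finsupp.single i 1 + N) (f * g) = 0 := by
  classical
  rw [coeff_mul]
  refine Finset.sum_eq_zero fun ⟨a, b⟩ hab => ?_
  rw [Finset.HasAntidiagonal.mem_antidiagonal] at hab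
  have hle : ∀ c, c ≤ Finsupp.single i 1 + N → c i = 0 → c ≤ N := fun c hc hci v => by
    by_cases hv : v = i
    · simp [hv, hci]
    · simpa [Finsupp.single_eq_of_ne hv] using hc v
  have hi := congrArg (· i) hab
  simp only [Finsupp.add_apply, Finsupp.single_eq_same, hNi] at hi
  rcases Nat.eq_zero_or_pos (a i) with ha | ha
  · rw [hf a (hle a (hab ▸ le_self_add) ha), zero_mul]
  · rw [hg b (hle b (hab ▸ le_add_self) (by omega)), mul_zero]

theorem prod_map_X [DecidableEq σ] (l : List σ) :
    (l.map X).prod = monomial (Multiset.toFinsupp (l : Multiset σ)) (1 : R) := by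
  induction l with
  | nil => simp
  | cons a l ih =>
    rw [List.map_cons, List.prod_cons, ih, ← Multiset.cons_coe, ← Multiset.singleton_add,
      Multiset.toFinsupp_add, Multiset.toFinsupp_singleton, X, monomial_mul, one_mul]

end MvPolynomial

namespace Matrix

variable {n R : Type*} [Fintype n] [DecidableEq n] [CommRing R]

theorem mul_prod_map_smul_of_mul_self {P : Matrix n n R} (hP : P * P = P) (us : List R) :
    P * (us.map (· • P)).prod = us.prod • P := by
  induction us with
  | nil => simp
  | cons u us ih =>
    rw [List.map_cons, List.prod_cons, List.prod_cons, ← Matrix.mul_assoc, Matrix.mul_smul, hP,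
      Matrix.smul_mul, ih, smul_smul]

theorem prod_map_smul_of_mul_self {P : Matrix n n R} (hP : P * P = P) {us : List R}
    (hus : us ≠ []) : (us.map (· • P)).prod = us.prod • P := by
  obtain ⟨u, us, rfl⟩ := List.exists_cons_of_ne_nil hus
  rw [List.map_cons, List.prod_cons, List.prod_cons, Matrix.smul_mul,
    mul_prod_map_smul_of_mul_self hP, smul_smul]

theorem charpoly_coeff_smul_eq_zero {u : R} (hu : u ^ 2 = 0) {A : Matrix n n R}
    (hA : A.trace = 0) {k : ℕ} (hk : k < Fintype.card n) : (u • A).charpoly.coeff k = 0 := by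
  rcases Nat.lt_or_ge k (Fintype.card n - 1) with hk' | hk'
  · have hmem := coeff_charpoly_mem_ideal_pow (M := u • A) (I := Ideal.span {u})
      (fun i j => Ideal.mem_span_singleton'.mpr ⟨A i j, by simp [mul_comm]⟩) k
    have hsq : Ideal.span {u} ^ 2 = ⊥ := by
      rw [Ideal.span_singleton_pow, hu, Ideal.span_singleton_eq_bot]
    exact (Submodule.mem_bot R).mp <| hsq ▸ Ideal.pow_le_pow_right (by omega) hmem
  · have : Nonempty n := Fintype.card_pos_iff.mp (by omega)
    obtain rfl : k = Fintype.card n - 1 := by omega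
    rw [← neg_eq_zero, ← trace_eq_neg_charpoly_coeff, trace_smul, hA, smul_zero]

end Matrix

def genericLetter (𝔽 : Type) [Field 𝔽] (n d : ℕ) (x : Fin d × Bool) :
    Matrix (Fin n) (Fin n) (Rpoly 𝔽 n d) :=
  if x.2 then (Xgen 𝔽 n d x.1)ᵀ else Xgen 𝔽 n d x.1

section Substitution

variable {𝔽 : Type} [Field 𝔽] {n d : ℕ}

/-- `X_k ↦ y_k P + [k = k₀] z E`, where `z = X none` and `y_k = X (some k)`. -/
def substitution (P E : Matrix (Fin n) (Fin n) 𝔽) (k₀ : Fin d) :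
    Rpoly 𝔽 n d →ₐ[𝔽] MvPolynomial (Option (Fin d)) 𝔽 :=
  aeval fun v =>
    X (some v.2.2) * C (P v.1 v.2.1) + if v.2.2 = k₀ then X none * C (E v.1 v.2.1) else 0

variable {P E : Matrix (Fin n) (Fin n) 𝔽} {k₀ : Fin d}

theorem map_Xgen_substitution (k : Fin d) :
    (Xgen 𝔽 n d k).map (substitution P E k₀) =
      (X (some k) : MvPolynomial (Option (Fin d)) 𝔽) • P.map C +
        if k = k₀ then (X none : MvPolynomial (Option (Fin d)) 𝔽) • E.map C else 0 := by
  ext i j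
  split_ifs with hk <;> simp [Xgen, substitution, hk]

theorem map_genericLetter_substitution (hP : Pᵀ = P) (hE : Eᵀ = E) (x : Fin d × Bool) :
    (genericLetter 𝔽 n d x).map (substitution P E k₀) =
      (Xgen 𝔽 n d x.1).map (substitution P E k₀) := by
  rcases x with ⟨k, _ | _⟩
  · rfl
  · rw [genericLetter, if_pos rfl, transpose_map, map_Xgen_substitution]
    split_ifs <;> simp [← transpose_map, hP, hE]

theorem constantCoeff_substitution (g : Rpoly 𝔽 n d) :
    constantCoeff (substitution P E k₀ g) = constantCoeff g := by
  have : constantCoeff.comp (substitution P E k₀).toRingHom = constantCoeff :=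
    ringHom_ext (fun a => by simp [substitution]) fun v => by
      by_cases h : v.2.2 = k₀ <;> simp [substitution, h]
  exact RingHom.congr_fun this g

end Substitution

section Truncation

variable {𝔽 : Type} [Field 𝔽] {n d : ℕ} {P E : Matrix (Fin n) (Fin n) 𝔽} {k₀ : Fin d}
  {I : Ideal (MvPolynomial (Option (Fin d)) 𝔽)}

theorem map_genericLetter_quotient (hP : Pᵀ = P) (hE : Eᵀ = E) (hz : X none ∈ I)
    (x : Fin d × Bool) :
    (genericLetter 𝔽 n d x).map ((Ideal.Quotient.mkₐ 𝔽 I).comp (substitution P E k₀)) =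
      Ideal.Quotient.mk I (X (some x.1)) • P.map (algebraMap 𝔽 _) := by
  have hz' : Ideal.Quotient.mk I (X none) = 0 := Ideal.Quotient.eq_zero_iff_mem.mpr hz
  rw [AlgHom.coe_comp, ← Matrix.map_map, map_genericLetter_substitution hP hE,
    map_Xgen_substitution]
  ext i j
  split_ifs <;> simp [hz'] <;> rfl

theorem substitution_sigmaCoeff_mem (hP : Pᵀ = P) (hPP : P * P = P) (hPtr : P.trace = 0)
    (hE : Eᵀ = E) (hz : X none ∈ I) (hy : ∀ k, X (some k) ^ 2 ∈ I) {t : ℕ} (ht1 : 1 ≤ t)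
    (htn : t ≤ n) {ws : List (Fin d × Bool)} (hws : ws ≠ []) :
    substitution P E k₀ (sigmaCoeff t (ws.map (genericLetter 𝔽 n d)).prod) ∈ I := by
  set ψ := (Ideal.Quotient.mkₐ 𝔽 I).comp (substitution P E k₀)
  set y : Fin d → MvPolynomial (Option (Fin d)) 𝔽 ⧸ I := fun k => Ideal.Quotient.mk I (X (some k))
  set P' := P.map (algebraMap 𝔽 (MvPolynomial (Option (Fin d)) 𝔽 ⧸ I))
  obtain ⟨x, ws, rfl⟩ := List.exists_cons_of_ne_nil hws
  have hprod : ((x :: ws).map (genericLetter 𝔽 n d)).prod.map ψ =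
      ((x :: ws).map (y ∘ Prod.fst)).prod • P' := by
    have hletter : ∀ x : Fin d × Bool, (genericLetter 𝔽 n d x).map ψ = y x.1 • P' :=
      map_genericLetter_quotient hP hE hz
    rw [← AlgHom.mapMatrix_apply, map_list_prod, List.map_map,
      show ⇑ψ.mapMatrix ∘ genericLetter 𝔽 n d = (· • P') ∘ (y ∘ Prod.fst) from funext hletter,
      ← List.map_map, prod_map_smul_of_mul_self (by rw [← Matrix.map_mul, hPP]) (by simp)]
  have hu : ((x :: ws).map (y ∘ Prod.fst)).prod ^ 2 = 0 := by
    rw [List.map_cons, List.prod_cons, mul_pow, Function.comp_apply, ← map_pow,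
      Ideal.Quotient.eq_zero_iff_mem.mpr (hy _), zero_mul]
  have hP'tr : P'.trace = 0 := by rw [← AddMonoidHom.map_trace, hPtr, map_zero]
  rw [← Ideal.Quotient.eq_zero_iff_mem]
  change ψ _ = 0
  rw [sigmaCoeff, map_mul, map_pow, map_neg, map_one, ← AlgHom.coe_toRingHom,
    ← Polynomial.coeff_map, ← charpoly_map, AlgHom.coe_toRingHom, hprod,
    charpoly_coeff_smul_eq_zero hu hP'tr (by simp; omega), mul_zero]

theorem invO_le_comap_bot (hP : Pᵀ = P) (hPP : P * P = P) (hPtr : P.trace = 0) (hE : Eᵀ = E)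
    (hz : X none ∈ I) (hy : ∀ k, X (some k) ^ 2 ∈ I) :
    invO 𝔽 n d ≤ (⊥ : Subalgebra 𝔽 (MvPolynomial (Option (Fin d)) 𝔽 ⧸ I)).comap
      ((Ideal.Quotient.mkₐ 𝔽 I).comp (substitution P E k₀)) := by
  refine Algebra.adjoin_le ?_
  rintro _ ⟨t, ht1, htn, w, hw, hform, rfl⟩
  obtain ⟨ws, rfl⟩ : w ∈ Set.range (List.map (genericLetter 𝔽 n d)) := by
    rw [Set.range_list_map]
    intro m hm
    rcases hform m hm with ⟨k, rfl⟩ | ⟨k, rfl⟩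
    exacts [⟨(k, false), rfl⟩, ⟨(k, true), rfl⟩]
  have hmem := substitution_sigmaCoeff_mem (k₀ := k₀) hP hPP hPtr hE hz hy ht1 htn
    (ws := ws) (by rintro rfl; exact hw rfl)
  rw [SetLike.mem_coe, Subalgebra.mem_comap, AlgHom.comp_apply, Ideal.Quotient.mkₐ_eq_mk,
    Ideal.Quotient.eq_zero_iff_mem.mpr hmem]
  exact Subalgebra.zero_mem _

theorem substitution_mem_of_isHomogeneous (hP : Pᵀ = P) (hPP : P * P = P) (hPtr : P.trace = 0)
    (hE : Eᵀ = E) (hz : X none ∈ I) (hy : ∀ k, X (some k) ^ 2 ∈ I)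
    (hI : I ≤ RingHom.ker constantCoeff) {g : Rpoly 𝔽 n d} (hg : g ∈ invO 𝔽 n d) {i : ℕ}
    (hi : 0 < i) (hgi : g.IsHomogeneous i) : substitution P E k₀ g ∈ I := by
  obtain ⟨c, hc⟩ := Algebra.mem_bot.mp (invO_le_comap_bot (k₀ := k₀) hP hPP hPtr hE hz hy hg)
  have hsub : substitution P E k₀ g - C c ∈ I := Ideal.Quotient.eq.mp hc.symm
  have hc0 : c = 0 := by
    have h := hI hsub
    rw [RingHom.mem_ker, map_sub, constantCoeff_substitution, constantCoeff_C, constantCoeff_eq,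
      hgi.coeff_eq_zero (by simp; omega), zero_sub, neg_eq_zero] at h
    exact h
  simpa [hc0] using hsub

end Truncation

section Indecomposable

variable {𝔽 : Type} [Field 𝔽] {n d : ℕ} {P E : Matrix (Fin n) (Fin n) 𝔽} {k₀ : Fin d}

theorem coeff_substitution_eq_zero_of_decomposable (hP : Pᵀ = P) (hPP : P * P = P)
    (hPtr : P.trace = 0) (hE : Eᵀ = E) {N : Option (Fin d) →₀ ℕ} (hN0 : N none = 0)
    (hN1 : ∀ v, N v ≤ 1) {f : Rpoly 𝔽 n d} (hf : Decomposable 𝔽 (invO 𝔽 n d) f) :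
    coeff (Finsupp.single none 1 + N) (substitution P E k₀ f) = 0 := by
  set I := Ideal.span ((fun s => monomial s (1 : 𝔽)) '' {s | ¬ s ≤ N})
  have hvanish : ∀ g ∈ I, ∀ m ≤ N, coeff m g = 0 := fun g hg m hm =>
    coeff_eq_zero_of_mem_span_monomial_not_le hg hm
  have hz : X none ∈ I := Ideal.subset_span ⟨Finsupp.single none 1, fun h => by
    simpa [hN0] using h none, rfl⟩
  have hy : ∀ k, X (some k) ^ 2 ∈ I := fun k => by
    refine Ideal.subset_span ⟨Finsupp.single (some k) 2, fun h => ?_, X_pow_eq_monomial.symm⟩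
    have h2 : 2 ≤ N (some k) := by simpa using h (some k)
    have := hN1 (some k)
    omega
  have hI : I ≤ RingHom.ker constantCoeff := fun g hg => by
    simpa [constantCoeff_eq] using hvanish g hg 0 zero_le
  have hmem : ∀ g ∈ invO 𝔽 n d, (∃ i, 0 < i ∧ g.IsHomogeneous i) → ∀ m ≤ N,
      coeff m (substitution P E k₀ g) = 0 := fun g hg ⟨i, hi, hgi⟩ =>
    hvanish _ (substitution_mem_of_isHomogeneous hP hPP hPtr hE hz hy hI hg hi hgi)
  refine (Submodule.span_le (p := LinearMap.ker
    ((lcoeff 𝔽 (Finsupp.single none 1 + N)).comp (substitution P E k₀).toLinearMap))).mpr ?_ hf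
  rintro _ ⟨g, hg, h, hh, hgi, hhi, rfl⟩
  simp only [SetLike.mem_coe, LinearMap.mem_ker, LinearMap.comp_apply, AlgHom.toLinearMap_apply,
    map_mul, lcoeff_apply]
  exact coeff_single_add_mul_eq_zero hN0 (hmem g hg hgi) (hmem h hh hhi)

theorem substitution_trace_word (hP : Pᵀ = P) (hPP : P * P = P) (hPtr : P.trace = 0)
    (hE : Eᵀ = E) (hEP : E * P = E) (hEtr : E.trace = 1) (b : Bool)
    {tail : List (Fin d × Bool)} (htail : k₀ ∉ tail.map Prod.fst) :
    substitution P E k₀ (((k₀, b) :: tail).map (genericLetter 𝔽 n d)).prod.trace =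
      (X none : MvPolynomial (Option (Fin d)) 𝔽) * (tail.map (X ∘ some ∘ Prod.fst)).prod := by
  set Pc := P.map (C : 𝔽 → MvPolynomial (Option (Fin d)) 𝔽)
  set Ec := E.map (C : 𝔽 → MvPolynomial (Option (Fin d)) 𝔽)
  set ys : List (MvPolynomial (Option (Fin d)) 𝔽) := tail.map (X ∘ some ∘ Prod.fst)
  set H := (X (some k₀) : MvPolynomial (Option (Fin d)) 𝔽) • Pc +
    (X none : MvPolynomial (Option (Fin d)) 𝔽) • Ec
  have hPc : Pc * Pc = Pc := by rw [← Matrix.map_mul, hPP]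
  have hH : H * Pc = H := by
    rw [Matrix.add_mul, Matrix.smul_mul, Matrix.smul_mul, hPc, ← Matrix.map_mul, hEP]
  have hletters :
      ((k₀, b) :: tail).map ((Matrix.map · (substitution P E k₀)) ∘ genericLetter 𝔽 n d) =
        H :: ys.map (· • Pc) := by
    rw [List.map_cons, List.map_map]
    congr 1
    · rw [Function.comp_apply, map_genericLetter_substitution hP hE, map_Xgen_substitution,
        if_pos rfl]
    · refine List.map_congr_left fun x hx => ?_
      have hx0 : x.1 ≠ k₀ := fun h => htail (h ▸ List.mem_map_of_mem hx)
      rw [Function.comp_apply, map_genericLetter_substitution hP hE, map_Xgen_substitution,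
        if_neg hx0, add_zero]
      rfl
  calc substitution P E k₀ (((k₀, b) :: tail).map (genericLetter 𝔽 n d)).prod.trace
      = (H * (ys.map (· • Pc)).prod).trace := by
        rw [AddMonoidHom.map_trace, ← AlgHom.mapMatrix_apply, map_list_prod, List.map_map]
        exact congrArg (fun L => (List.prod L).trace) hletters
    _ = (H * (Pc * (ys.map (· • Pc)).prod)).trace := by
        rw [← Matrix.mul_assoc, hH]
    _ = ys.prod * H.trace := by
        rw [mul_prod_map_smul_of_mul_self hPc, Matrix.mul_smul, trace_smul, hH, smul_eq_mul]
    _ = X none * ys.prod := by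
        rw [trace_add, trace_smul, trace_smul, ← AddMonoidHom.map_trace, ← AddMonoidHom.map_trace,
          hPtr, hEtr, map_zero, map_one, smul_zero, zero_add, smul_eq_mul, mul_one, mul_comm]

theorem not_decomposable_trace_word (hP : Pᵀ = P) (hPP : P * P = P) (hPtr : P.trace = 0)
    (hE : Eᵀ = E) (hEP : E * P = E) (hEtr : E.trace = 1) {ws : List (Fin d × Bool)}
    (hws : ws ≠ []) (hnodup : (ws.map Prod.fst).Nodup) :
    ¬ Decomposable 𝔽 (invO 𝔽 n d) (ws.map (genericLetter 𝔽 n d)).prod.trace := by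
  obtain ⟨⟨k₀, b⟩, tail, rfl⟩ := List.exists_cons_of_ne_nil hws
  rw [List.map_cons, List.nodup_cons] at hnodup
  set ks := tail.map (some ∘ Prod.fst)
  set N := Multiset.toFinsupp (ks : Multiset (Option (Fin d)))
  have hN0 : N none = 0 := by simp [N, ks, Multiset.toFinsupp_apply]
  have hN1 : ∀ v, N v ≤ 1 := by
    have : ks.Nodup := by
      simpa only [ks, ← List.map_map] using hnodup.2.map (Option.some_injective _)
    exact Multiset.nodup_iff_count_le_one.mp (Multiset.coe_nodup.mpr this)
  intro hdec
  have h := coeff_substitution_eq_zero_of_decomposable (k₀ := k₀) hP hPP hPtr hE hN0 hN1 hdec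
  rw [substitution_trace_word hP hPP hPtr hE hEP hEtr b hnodup.1, ← List.map_map, prod_map_X, X,
    monomial_mul, one_mul, coeff_monomial, if_pos rfl] at h
  exact one_ne_zero h

end Indecomposable

section TruncatedIdentity

variable (R : Type*) [Semiring R] (n p : ℕ)

def truncatedIdentity : Matrix (Fin n) (Fin n) R :=
  diagonal fun i => if (i : ℕ) < p then 1 else 0

variable {R n p}

theorem truncatedIdentity_transpose : (truncatedIdentity R n p)ᵀ = truncatedIdentity R n p :=
  diagonal_transpose _

theorem truncatedIdentity_mul_self :
    truncatedIdentity R n p * truncatedIdentity R n p = truncatedIdentity R n p := by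
  rw [truncatedIdentity, diagonal_mul_diagonal]
  congr 1
  ext i
  split_ifs <;> simp

theorem trace_truncatedIdentity (hpn : p ≤ n) : (truncatedIdentity R n p).trace = p := by
  rw [truncatedIdentity, trace_diagonal, Finset.sum_boole, Fin.card_filter_val_lt,
    min_eq_right hpn]

theorem diagonal_single_mul_truncatedIdentity {i : Fin n} (hi : (i : ℕ) < p) :
    diagonal (Pi.single i 1) * truncatedIdentity R n p = diagonal (Pi.single i 1) := by
  rw [truncatedIdentity, diagonal_mul_diagonal]
  congr 1
  ext j
  by_cases hj : j = i
  · subst hj; simp [hi]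
  · simp [hj]

end TruncatedIdentity

theorem multilinear_trace_indecomposable_general
    (𝔽 : Type) [Field 𝔽] (n d : ℕ) (hd : 1 ≤ d)
    (hp0 : 0 < ringChar 𝔽) (hpn : ringChar 𝔽 ≤ n)
    (σ : Equiv.Perm (Fin d)) (δ : Fin d → Bool) :
    ¬ Decomposable 𝔽 (invO 𝔽 n d)
      (Matrix.trace (List.ofFn (fun i : Fin d =>
        if δ i then (Xgen 𝔽 n d (σ i))ᵀ else Xgen 𝔽 n d (σ i))).prod) := by
  have hword : List.ofFn (fun i => if δ i then (Xgen 𝔽 n d (σ i))ᵀ else Xgen 𝔽 n d (σ i)) =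
      (List.ofFn fun i => (σ i, δ i)).map (genericLetter 𝔽 n d) := by
    rw [List.map_ofFn]; rfl
  rw [hword]
  refine not_decomposable_trace_word (P := truncatedIdentity 𝔽 n (ringChar 𝔽))
    (E := diagonal (Pi.single ⟨0, by omega⟩ 1)) truncatedIdentity_transpose
    truncatedIdentity_mul_self ?_ (diagonal_transpose _)
    (diagonal_single_mul_truncatedIdentity hp0) (by simp [trace_diagonal]) ?_ ?_
  · rw [trace_truncatedIdentity hpn, ringChar.Nat.cast_ringChar]
  · rw [Ne, List.ofFn_eq_nil_iff]; omega
  · rw [List.map_ofFn]; exact List.nodup_ofFn.mpr σ.injective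

theorem multilinear_trace_indecomposable
    (𝔽 : Type) [Field 𝔽] [Infinite 𝔽] (n d : ℕ) (hn : 2 ≤ n) (hd : 1 ≤ d)
    (hp0 : 0 < ringChar 𝔽) (hpn : ringChar 𝔽 ≤ n) (hp2 : ringChar 𝔽 ≠ 2)
    (σ : Equiv.Perm (Fin d)) (δ : Fin d → Bool) :
    ¬ Decomposable 𝔽 (invO 𝔽 n d)
      (Matrix.trace (List.ofFn (fun i : Fin d =>
        if δ i then (Xgen 𝔽 n d (σ i))ᵀ else Xgen 𝔽 n d (σ i))).prod) :=
  multilinear_trace_indecomposable_general 𝔽 n d hd hp0 hpn σ δ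
end
end

section
/- Let 𝔽 be an infinite field of characteristic p with 0 < p ≤ n and p ≠ 2, and let d ≥ 1. Then every set S of homogeneous elements that generates R^{O(n)} as an 𝔽-algebra contains an element of degree at least d. In particular, the maximal degree D(R^{O(n)}) of elements in a minimal homogeneous system of generators of R^{O(n)} tends to infinity as d tends to infinity. -/
open Matrix
noncomputable section

/-!
Let `p = char 𝔽` and specialise the generic matrices to diagonal ones over `𝔽[y_0, …, y_{d-1}]`:
`X_k ↦ y_k E_p` for `k ≠ 0` and `X_0 ↦ y_0 E_1`, where `E_r` is a diagonal idempotent of rank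
`r`. A word with letter multiset `μ` becomes `y^μ E_r`, with `r = 1` if the word contains `X_0`
and `r = p` otherwise, so its `σ_t` becomes `C(r, t) y^{tμ}`. This is a square-free monomial
without `y_0` only if `t = 1` and `r = p`, and then `C(p, 1) = 0`; hence the images of
invariants contain no such monomial. Any splitting of `y_0 ⋯ y_{d-1}` into two nonconstant
monomials has a factor without `y_0`, so in the image of a product of two invariants the
coefficient of `y_0 ⋯ y_{d-1}` only involves their constant terms. Hence this monomial, the image
of `tr(X_0 ⋯ X_{d-1})`, already occurs in the image of a generator, of degree at least `d`.
-/

open Finset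

namespace MvPolynomial

variable {σ τ : Type*} (R : Type*) [CommSemiring R]

def constBelow (W : σ →₀ ℕ) : Subalgebra R (MvPolynomial σ R) where
  carrier := {f | ∀ v ≤ W, v ≠ 0 → coeff v f = 0}
  mul_mem' {f g} hf hg v hvW hv0 := by
    classical
    rw [coeff_mul]
    refine sum_eq_zero fun ⟨a, b⟩ hab => ?_
    rw [HasAntidiagonal.mem_antidiagonal] at hab
    subst hab
    by_cases ha : a = 0
    · subst ha
      rw [zero_add] at hvW hv0
      rw [hg b hvW hv0, mul_zero]
    · rw [hf a (le_trans le_self_add hvW) ha, zero_mul]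
  add_mem' hf hg v hvW hv0 := by rw [coeff_add, hf v hvW hv0, hg v hvW hv0, add_zero]
  algebraMap_mem' r v _ hv0 := by classical rw [algebraMap_eq, coeff_C, if_neg (Ne.symm hv0)]

variable {R}

theorem mem_constBelow {W : σ →₀ ℕ} {f : MvPolynomial σ R} :
    f ∈ constBelow R W ↔ ∀ v ≤ W, v ≠ 0 → coeff v f = 0 := Iff.rfl

theorem coeff_eq_zero_of_mem_adjoin {S : Set (MvPolynomial σ R)} {V : σ →₀ ℕ} {k₀ : σ}
    (hV : V k₀ = 1) (hS : Algebra.adjoin R S ≤ constBelow R (V.erase k₀))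
    (hSV : ∀ s ∈ S, coeff V s = 0) {f : MvPolynomial σ R} (hf : f ∈ Algebra.adjoin R S) :
    coeff V f = 0 := by
  classical
  induction hf using Algebra.adjoin_induction with
  | mem s hs => exact hSV s hs
  | algebraMap r =>
    rw [algebraMap_eq, coeff_C, if_neg]
    rintro rfl
    simp at hV
  | add f g _ _ hf hg => rw [coeff_add, hf, hg, add_zero]
  | mul f g hfS hgS hf hg =>
    rw [coeff_mul]
    refine sum_eq_zero fun ⟨a, b⟩ hab => ?_
    rw [HasAntidiagonal.mem_antidiagonal] at hab
    subst hab
    have below_of_eq_zero {c : σ →₀ ℕ} (hc : c ≤ a + b) (hc0 : c k₀ = 0) :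
        c ≤ (a + b).erase k₀ := fun k => by
      rcases eq_or_ne k k₀ with rfl | hk
      · simp [hc0]
      · simpa [Finsupp.erase_ne hk] using hc k
    by_cases ha : a = 0
    · subst ha; rw [zero_add] at hg; rw [hg, mul_zero]
    by_cases hb : b = 0
    · subst hb; rw [add_zero] at hf; rw [hf, zero_mul]
    -- the exponent of `X k₀` is `1`, so it is missing from `a` or from `b`
    rcases Nat.eq_zero_or_pos (a k₀) with ha₀ | ha₀
    · rw [mem_constBelow.mp (hS hfS) a (below_of_eq_zero le_self_add ha₀) ha, zero_mul]
    · have hb₀ : b k₀ = 0 := by simp only [Finsupp.add_apply] at hV; omega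
      rw [mem_constBelow.mp (hS hgS) b (below_of_eq_zero le_add_self hb₀) hb, mul_zero]

theorem totalDegree_aeval_le {g : σ → MvPolynomial τ R} (hg : ∀ i, (g i).IsHomogeneous 1)
    (f : MvPolynomial σ R) : (aeval g f).totalDegree ≤ f.totalDegree := by
  conv_lhs => rw [← sum_homogeneousComponent f]
  rw [map_sum]
  refine (totalDegree_finsetSum _ _).trans (Finset.sup_le fun i hi => ?_)
  have := ((homogeneousComponent_isHomogeneous i f).aeval g hg).totalDegree_le
  rw [one_mul] at this
  exact this.trans (Nat.lt_succ_iff.mp (mem_range.mp hi))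

end MvPolynomial

theorem Polynomial.coeff_X_sub_C_pow_mul_X_pow {A : Type*} [CommRing A] (m : A) {a b t : ℕ}
    (ht : t ≤ a + b) :
    ((X - C m) ^ a * X ^ b).coeff (a + b - t) = (-1) ^ t * a.choose t * m ^ t := by
  rw [coeff_mul_X_pow']
  by_cases hta : t ≤ a
  · rw [if_pos (by omega), show a + b - t - b = a - t by omega, sub_eq_add_neg, ← C_neg,
      coeff_X_add_C_pow, Nat.sub_sub_self hta, Nat.choose_symm hta, neg_pow]
    ring
  · rw [if_neg (by omega), Nat.choose_eq_zero_of_lt (by omega)]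
    simp

open Polynomial in
theorem Matrix.charpoly_diagonal_ite {ι A : Type*} [Fintype ι] [DecidableEq ι] [CommRing A]
    (U : Finset ι) (m : A) :
    (diagonal fun i => if i ∈ U then m else 0).charpoly =
      (X - C m) ^ #U * X ^ (Fintype.card ι - #U) := by
  rw [charpoly_diagonal]
  simp [apply_ite, prod_ite, filter_not, card_sdiff]

theorem Matrix.coeff_charpoly_diagonal_ite {ι A : Type*} [Fintype ι] [DecidableEq ι]
    [CommRing A] (U : Finset ι) (m : A) {t : ℕ} (ht : t ≤ Fintype.card ι) :
    (diagonal fun i => if i ∈ U then m else 0).charpoly.coeff (Fintype.card ι - t) =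
      (-1) ^ t * (#U).choose t * m ^ t := by
  obtain ⟨r, hr⟩ := Nat.exists_eq_add_of_le (card_le_univ U)
  rw [charpoly_diagonal_ite, hr, Nat.add_sub_cancel_left,
    Polynomial.coeff_X_sub_C_pow_mul_X_pow _ (hr ▸ ht)]

theorem List.exists_forall₂_of_forall_mem_exists {α β : Type*} {R : α → β → Prop} :
    ∀ {l : List α}, (∀ a ∈ l, ∃ b, R a b) → ∃ l', Forall₂ R l l'
  | [], _ => ⟨[], .nil⟩
  | a :: l, h => by
    obtain ⟨b, hb⟩ := h a mem_cons_self
    obtain ⟨l', hl'⟩ := exists_forall₂_of_forall_mem_exists fun x hx => h x (mem_cons_of_mem a hx)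
    exact ⟨b :: l', .cons hb hl'⟩

section DiagonalEvaluation

open MvPolynomial

variable {𝔽 : Type} [Field 𝔽] {n d : ℕ}

def IsXgenLetter (M : Matrix (Fin n) (Fin n) (Rpoly 𝔽 n d)) (k : Fin d) : Prop :=
  M = Xgen 𝔽 n d k ∨ M = (Xgen 𝔽 n d k)ᵀ

variable (𝔽) in
def diagEval (T : Fin d → Finset (Fin n)) : Rpoly 𝔽 n d →ₐ[𝔽] MvPolynomial (Fin d) 𝔽 :=
  aeval fun q => if q.1 = q.2.1 ∧ q.1 ∈ T q.2.2 then X q.2.2 else 0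

theorem totalDegree_diagEval_le (T : Fin d → Finset (Fin n)) (f : Rpoly 𝔽 n d) :
    (diagEval 𝔽 T f).totalDegree ≤ f.totalDegree :=
  totalDegree_aeval_le (fun q => by
    split_ifs
    exacts [isHomogeneous_X _ _, isHomogeneous_zero _ _ _]) f

theorem map_diagEval_of_isXgenLetter (T : Fin d → Finset (Fin n))
    {M : Matrix (Fin n) (Fin n) (Rpoly 𝔽 n d)} {k : Fin d} (hM : IsXgenLetter M k) :
    M.map (diagEval 𝔽 T) = diagonal fun i => if i ∈ T k then X k else 0 := by
  have hX : (Xgen 𝔽 n d k).map (diagEval 𝔽 T) = diagonal fun i => if i ∈ T k then X k else 0 := by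
    ext i j
    rcases eq_or_ne i j with rfl | hij
    · simp [Xgen, diagEval]
    · simp [Xgen, diagEval, hij]
  rcases hM with rfl | rfl
  · exact hX
  · rw [transpose_map, hX, diagonal_transpose]

theorem map_prod_diagEval (T : Fin d → Finset (Fin n))
    {w : List (Matrix (Fin n) (Fin n) (Rpoly 𝔽 n d))} {ks : List (Fin d)}
    (hw : w.Forall₂ IsXgenLetter ks) :
    w.prod.map (diagEval 𝔽 T) = diagonal fun i =>
      if ∀ k ∈ ks, i ∈ T k then monomial (Multiset.toFinsupp ks) 1 else 0 := by
  induction hw with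
  | nil => simp [Matrix.map_one]
  | @cons M k w ks hM _ ih =>
    rw [List.prod_cons, Matrix.map_mul, map_diagEval_of_isXgenLetter T hM, ih,
      diagonal_mul_diagonal]
    congr 1
    ext1 i
    simp only [List.forall_mem_cons, ← Multiset.cons_coe, ← Multiset.singleton_add,
      Multiset.toFinsupp_add, Multiset.toFinsupp_singleton]
    split_ifs <;> simp_all [X, monomial_mul]

theorem diagEval_sigmaCoeff_prod (T : Fin d → Finset (Fin n))
    {w : List (Matrix (Fin n) (Fin n) (Rpoly 𝔽 n d))} {ks : List (Fin d)}
    (hw : w.Forall₂ IsXgenLetter ks) {t : ℕ} (ht : t ≤ n) :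
    diagEval 𝔽 T (sigmaCoeff t w.prod) =
      monomial (t • Multiset.toFinsupp ks) ((#{i | ∀ k ∈ ks, i ∈ T k}).choose t : 𝔽) := by
  have hcoeff := coeff_charpoly_diagonal_ite (A := MvPolynomial (Fin d) 𝔽)
    {i | ∀ k ∈ ks, i ∈ T k} (monomial (Multiset.toFinsupp ks) 1) (t := t) (by simpa using ht)
  simp only [Fintype.card_fin, mem_filter, mem_univ, true_and] at hcoeff
  rw [sigmaCoeff, map_mul, map_pow, map_neg, map_one, ← AlgHom.coe_toRingHom,
    ← Polynomial.coeff_map, ← charpoly_map, AlgHom.coe_toRingHom, map_prod_diagEval T hw,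
    hcoeff, ← mul_assoc, ← mul_assoc, ← mul_pow, neg_one_mul, neg_neg, one_pow, one_mul,
    monomial_pow, one_pow, ← map_natCast (C : 𝔽 →+* MvPolynomial (Fin d) 𝔽),
    C_mul_monomial, mul_one]

variable (n) in
def prefixMask (p : ℕ) (k₀ k : Fin d) : Finset (Fin n) :=
  {i | (i : ℕ) < if k = k₀ then 1 else p}

theorem card_filter_forall_mem_prefixMask {p : ℕ} (hp : 0 < p) {k₀ : Fin d}
    {ks : List (Fin d)} (hks : ks ≠ []) :
    #{i | ∀ k ∈ ks, i ∈ prefixMask n p k₀ k} = min n (if k₀ ∈ ks then 1 else p) := by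
  rw [← Fin.card_filter_val_lt]
  congr 1
  ext i
  simp only [prefixMask, mem_filter, mem_univ, true_and]
  split_ifs with h₀
  · exact ⟨fun h => by simpa using h k₀ h₀, fun h k _ => by split_ifs <;> omega⟩
  · have hne {k : Fin d} (hk : k ∈ ks) : k ≠ k₀ := ne_of_mem_of_not_mem hk h₀
    obtain ⟨k, hk⟩ := List.exists_mem_of_ne_nil ks hks
    exact ⟨fun h => by simpa [hne hk] using h k hk, fun h k hk => by simpa [hne hk]⟩

theorem diagEval_prefixMask_mem_constBelow {p : ℕ} (hp : 0 < p) (hpn : p ≤ n)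
    (hchar : (p : 𝔽) = 0) {k₀ : Fin d} {W : Fin d →₀ ℕ} (hW : ∀ k, W k ≤ 1) (hWk₀ : W k₀ = 0)
    {t : ℕ} (htn : t ≤ n) {w : List (Matrix (Fin n) (Fin n) (Rpoly 𝔽 n d))}
    {ks : List (Fin d)} (hks : ks ≠ []) (hw : w.Forall₂ IsXgenLetter ks) :
    diagEval 𝔽 (prefixMask n p k₀) (sigmaCoeff t w.prod) ∈ constBelow 𝔽 W := by
  refine mem_constBelow.mpr fun v hvW hv0 => ?_
  rw [diagEval_sigmaCoeff_prod _ hw htn, coeff_monomial, ite_eq_right_iff]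
  rintro rfl
  have ht : t ≠ 0 := by rintro rfl; exact hv0 (zero_smul _ _)
  have hexp {k : Fin d} (hk : k ∈ ks) :
      t ≤ (t • Multiset.toFinsupp (ks : Multiset (Fin d))) k := by
    simpa using Nat.le_mul_of_pos_right t (Multiset.count_pos.mpr (Multiset.mem_coe.mpr hk))
  have hk₀ : k₀ ∉ ks := fun hk₀ => by have := hexp hk₀; have := hvW k₀; omega
  obtain ⟨k, hk⟩ := List.exists_mem_of_ne_nil ks hks
  have ht1 : t = 1 := by have := hexp hk; have := hvW k; have := hW k; omega
  rw [card_filter_forall_mem_prefixMask hp hks, if_neg hk₀, min_eq_right hpn, ht1,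
    Nat.choose_one_right, hchar]

theorem invO_le_comap_constBelow {p : ℕ} (hp : 0 < p) (hpn : p ≤ n) (hchar : (p : 𝔽) = 0)
    {k₀ : Fin d} {W : Fin d →₀ ℕ} (hW : ∀ k, W k ≤ 1) (hWk₀ : W k₀ = 0) :
    invO 𝔽 n d ≤ (constBelow 𝔽 W).comap (diagEval 𝔽 (prefixMask n p k₀)) := by
  refine Algebra.adjoin_le ?_
  rintro _ ⟨t, -, htn, w, hw, hletters, rfl⟩
  obtain ⟨ks, hks⟩ := List.exists_forall₂_of_forall_mem_exists (R := IsXgenLetter)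
    fun M hM => exists_or.mpr (hletters M hM)
  exact diagEval_prefixMask_mem_constBelow hp hpn hchar hW hWk₀ htn
    (fun h => hw (List.forall₂_nil_right_iff.mp (h ▸ hks))) hks

theorem forall₂_isXgenLetter_map_Xgen (ks : List (Fin d)) :
    (ks.map (Xgen 𝔽 n d)).Forall₂ IsXgenLetter ks :=
  List.forall₂_map_left_iff.mpr (List.forall₂_same.mpr fun _ _ => Or.inl rfl)

theorem sigmaCoeff_one_prod_Xgen_mem_invO (hn : 1 ≤ n) {ks : List (Fin d)} (hks : ks ≠ []) :
    sigmaCoeff 1 (ks.map (Xgen 𝔽 n d)).prod ∈ invO 𝔽 n d :=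
  Algebra.subset_adjoin ⟨1, le_rfl, hn, _, by simpa using hks, fun _ hM => .inl <| by
    obtain ⟨k, -, rfl⟩ := List.mem_map.mp hM
    exact ⟨k, rfl⟩, rfl⟩

theorem diagEval_prefixMask_sigmaCoeff_one_prod_Xgen {p : ℕ} (hp : 0 < p) (hn : 1 ≤ n)
    {k₀ : Fin d} {ks : List (Fin d)} (hk₀ : k₀ ∈ ks) :
    diagEval 𝔽 (prefixMask n p k₀) (sigmaCoeff 1 (ks.map (Xgen 𝔽 n d)).prod) =
      monomial (Multiset.toFinsupp ks) 1 := by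
  rw [diagEval_sigmaCoeff_prod _ (forall₂_isXgenLetter_map_Xgen ks) hn,
    card_filter_forall_mem_prefixMask hp (List.ne_nil_of_mem hk₀), if_pos hk₀,
    min_eq_right hn, one_smul, Nat.choose_self, Nat.cast_one]

end DiagonalEvaluation

open MvPolynomial in
theorem invO_generating_set_degree_ge_general
    (𝔽 : Type) [Field 𝔽] (n d : ℕ) (hd : 1 ≤ d)
    (hp0 : 0 < ringChar 𝔽) (hpn : ringChar 𝔽 ≤ n)
    (S : Set (Rpoly 𝔽 n d))
    (hgen : Algebra.adjoin 𝔽 S = invO 𝔽 n d) :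
    ∃ f ∈ S, d ≤ f.totalDegree := by
  by_contra! hS
  let k₀ : Fin d := ⟨0, hd⟩
  let φ := diagEval 𝔽 (prefixMask n (ringChar 𝔽) k₀)
  let V : Fin d →₀ ℕ := Multiset.toFinsupp (List.finRange d : Multiset (Fin d))
  have hV (k : Fin d) : V k = 1 := by simp [V, Multiset.toFinsupp_apply]
  have hadjoin : Algebra.adjoin 𝔽 (φ '' S) = (invO 𝔽 n d).map φ := by
    rw [← AlgHom.map_adjoin, hgen]
  have hφS : Algebra.adjoin 𝔽 (φ '' S) ≤ constBelow 𝔽 (V.erase k₀) :=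
    hadjoin ▸ Subalgebra.map_le.mpr (invO_le_comap_constBelow hp0 hpn
      ringChar.Nat.cast_ringChar (fun k => by rw [Finsupp.erase_apply]; split_ifs <;> simp [hV])
      Finsupp.erase_same)
  have hφSV : ∀ s ∈ φ '' S, coeff V s = 0 := by
    rintro _ ⟨f, hf, rfl⟩
    refine coeff_eq_zero_of_totalDegree_lt ((totalDegree_diagEval_le _ f).trans_lt ?_)
    simpa [V, Multiset.toFinsupp_support, hV] using hS f hf
  have hF := coeff_eq_zero_of_mem_adjoin (hV k₀) hφS hφSV (f := φ _) <| by
    rw [hadjoin]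
    exact Subalgebra.mem_map.mpr ⟨_, sigmaCoeff_one_prod_Xgen_mem_invO (by omega)
      (List.ne_nil_of_mem (List.mem_finRange k₀)), rfl⟩
  rw [diagEval_prefixMask_sigmaCoeff_one_prod_Xgen hp0 (by omega) (List.mem_finRange k₀),
    coeff_monomial, if_pos rfl] at hF
  exact one_ne_zero hF

theorem invO_generating_set_degree_ge
    (𝔽 : Type) [Field 𝔽] [Infinite 𝔽] (n d : ℕ) (hn : 2 ≤ n) (hd : 1 ≤ d)
    (hp0 : 0 < ringChar 𝔽) (hpn : ringChar 𝔽 ≤ n) (hp2 : ringChar 𝔽 ≠ 2)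
    (S : Set (Rpoly 𝔽 n d)) (hhom : ∀ f ∈ S, ∃ k, MvPolynomial.IsHomogeneous f k)
    (hgen : Algebra.adjoin 𝔽 S = invO 𝔽 n d) :
    ∃ f ∈ S, d ≤ f.totalDegree :=
  invO_generating_set_degree_ge_general 𝔽 n d hd hp0 hpn S hgen

end
end

section
/- Let 𝔽 be an infinite field of characteristic p ≠ 2 and d ≥ 1. If tr(X₁⁺ X₂⁺ ⋯ X_d⁺) is decomposable in R₊^{O(n)} (i.e., lies in the 𝔽-span of products g·h with g, h ∈ R₊^{O(n)} homogeneous of positive degree), then tr((X₁ + X₁ᵀ)(X₂ + X₂ᵀ) ⋯ (X_d + X_dᵀ)) is decomposable in R^{O(n)} (i.e., lies in the 𝔽-span of products g·h with g, h ∈ R^{O(n)} homogeneous of positive degree). -/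
open Matrix
noncomputable section

/-!
The substitution `x_{ij}(k) ↦ x_{ij}(k) + x_{ji}(k)` is a graded algebra endomorphism of `R`
sending `X_k⁺` to `X_k + X_kᵀ`, so it carries a decomposition of `tr(X₁⁺ ⋯ X_d⁺)` in
`R₊^{O(n)}` to one of `tr((X₁ + X₁ᵀ) ⋯ (X_d + X_dᵀ))`, provided it maps `R₊^{O(n)}` into
`R^{O(n)}`. It sends `σ_t(X_{k₁}⁺ ⋯ X_{k_r}⁺)` to `σ_t` of a sum of words in the `X_k` and
`X_kᵀ`, and the coefficients of the characteristic polynomial of a sum of elements of a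
multiplicatively closed set `W` of matrices lie in the ring generated by those of the elements
of `W` (Amitsur).

For the latter, read the `σ_t` off `det (1 - x M)` and work modulo `x ^ (N + 1)` with weighted
sums `∑ x ^ mᵢ Dᵢ`, `Dᵢ ∈ W`, `mᵢ ≥ 1`. Splitting off a term `A = x ^ m D`, the identity
`1 - (A + T) = (1 - A) (1 - (∑_{k ≤ N} A ^ k) T) - A ^ (N + 1) T`
factors the determinant modulo `x ^ (N + 1)` into `det (1 - x ^ m D)`, the reversed
characteristic polynomial of `D` evaluated at `x ^ m`, times the determinant of a weighted sum in
which `x ^ m D` is replaced by the terms `x ^ (m' + k m) D ^ k E` (`x ^ m' E` a term of `T`,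
`1 ≤ k ≤ N`), all of weight larger than `m` when `m` is the smallest weight. Descending induction
on the smallest weight ends once all weights exceed `N`.
-/

theorem Subsemigroup.pow_mul_mem {M : Type*} [Monoid M] (W : Subsemigroup M) {a b : M}
    (ha : a ∈ W) (hb : b ∈ W) (k : ℕ) : a ^ k * b ∈ W := by
  induction k with
  | zero => simpa using hb
  | succ k ih => simpa [pow_succ', mul_assoc] using W.mul_mem ha ih

theorem Subsemigroup.exists_list_of_mem_closure {M : Type*} [Monoid M] {s : Set M} {x : M}
    (hx : x ∈ closure s) : ∃ l : List M, l ≠ [] ∧ (∀ y ∈ l, y ∈ s) ∧ l.prod = x := by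
  induction hx using closure_induction with
  | mem x hx => exact ⟨[x], List.cons_ne_nil _ _, by simpa using hx, List.prod_singleton⟩
  | mul x y _ _ hx hy =>
    obtain ⟨l₁, hl₁, h₁, rfl⟩ := hx
    obtain ⟨l₂, -, h₂, rfl⟩ := hy
    refine ⟨l₁ ++ l₂, by simp [hl₁], fun z hz => ?_, List.prod_append⟩
    rcases List.mem_append.mp hz with hz | hz
    exacts [h₁ z hz, h₂ z hz]

theorem List.prod_mem_of_ne_nil {M A : Type*} [Monoid M] [SetLike A M] [MulMemClass A M] {S : A}
    {l : List M} (hl : l ≠ []) (h : ∀ x ∈ l, x ∈ S) : l.prod ∈ S := by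
  induction l with
  | nil => exact absurd rfl hl
  | cons a t ih =>
    rcases eq_or_ne t [] with rfl | ht
    · simpa using h a (List.mem_cons_self)
    · rw [List.prod_cons]
      exact mul_mem (h a List.mem_cons_self) (ih ht fun x hx => h x (List.mem_cons_of_mem a hx))

theorem Matrix.map_list_prod {ι α β F : Type*} [Fintype ι] [DecidableEq ι] [Semiring α]
    [Semiring β] [FunLike F α β] [RingHomClass F α β] (f : F) (l : List (Matrix ι ι α)) :
    l.prod.map f = (l.map (·.map f)).prod :=
  _root_.map_list_prod (f : α →+* β).mapMatrix l

namespace Polynomial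

variable {S : Type*} [CommRing S]

def lowCoeffSubring (B : Subring S) (N : ℕ) : Subring S[X] where
  carrier := {p | ∀ j ≤ N, p.coeff j ∈ B}
  zero_mem' _ _ := by simp [B.zero_mem]
  one_mem' j _ := by
    rw [coeff_one]
    split_ifs
    exacts [B.one_mem, B.zero_mem]
  add_mem' hp hq j hj := by simpa using B.add_mem (hp j hj) (hq j hj)
  neg_mem' hp j hj := by simpa using B.neg_mem (hp j hj)
  mul_mem' {p q} hp hq j hj := by
    rw [coeff_mul]
    refine B.sum_mem fun c hc => ?_
    have hc' := Finset.HasAntidiagonal.mem_antidiagonal.mp hc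
    exact B.mul_mem (hp c.1 (by omega)) (hq c.2 (by omega))

variable {B : Subring S} {N : ℕ}

theorem mem_lowCoeffSubring_of_sub_mem {p q : S[X]} (hq : q ∈ lowCoeffSubring B N)
    (hpq : p - q ∈ Ideal.span {(X : S[X]) ^ (N + 1)}) : p ∈ lowCoeffSubring B N := by
  intro j hj
  have hzero := X_pow_dvd_iff.mp (Ideal.mem_span_singleton.mp hpq) j (by omega)
  rw [coeff_sub, sub_eq_zero] at hzero
  exact hzero ▸ hq j hj

theorem expand_mem_lowCoeffSubring {m : ℕ} (hm : 0 < m) {p : S[X]} (hp : ∀ j, p.coeff j ∈ B) :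
    expand S m p ∈ lowCoeffSubring B N := by
  intro j _
  rw [coeff_expand hm]
  split_ifs
  exacts [hp _, B.zero_mem]

end Polynomial

namespace Matrix

open Polynomial

section

variable {ι R : Type*} [Fintype ι] [DecidableEq ι] [CommRing R]

theorem det_sub_det_mem_of_sub_mem {I : Ideal R} {M M' : Matrix ι ι R}
    (h : M - M' ∈ I.matrix ι) : M.det - M'.det ∈ I := by
  rw [← Ideal.Quotient.eq, RingHom.map_det, RingHom.map_det]
  congr 1
  exact ext fun i j => Ideal.Quotient.eq.mpr (h i j)

theorem coeff_charpolyRev_of_le [Nontrivial R] (M : Matrix ι ι R) {j : ℕ}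
    (hj : j ≤ Fintype.card ι) : M.charpolyRev.coeff j = M.charpoly.coeff (Fintype.card ι - j) := by
  rw [← reverse_charpoly, coeff_reverse, charpoly_natDegree_eq_dim, revAt_le hj]

theorem coeff_charpolyRev_eq_zero_of_lt [Nontrivial R] (M : Matrix ι ι R) {j : ℕ}
    (hj : Fintype.card ι < j) : M.charpolyRev.coeff j = 0 := by
  rw [← reverse_charpoly, coeff_reverse, charpoly_natDegree_eq_dim, revAt_eq_self_of_lt hj,
    coeff_eq_zero_of_natDegree_lt (by rwa [charpoly_natDegree_eq_dim])]

theorem det_one_sub_X_pow_smul (m : ℕ) (D : Matrix ι ι R) :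
    det (1 - (X : R[X]) ^ m • D.map C) = expand R m D.charpolyRev := by
  rw [charpolyRev, AlgHom.map_det]
  congr 1
  ext i j
  by_cases h : i = j <;> simp [h]

theorem X_pow_smul_mem_matrix_span {N k : ℕ} (h : N < k) (M : Matrix ι ι R[X]) :
    (X : R[X]) ^ k • M ∈ (Ideal.span {(X : R[X]) ^ (N + 1)}).matrix ι := fun _ _ =>
  Ideal.mem_span_singleton.mpr (dvd_mul_of_dvd_left (pow_dvd_pow X h) _)

end

section

variable {ι S : Type*} [CommRing S]

def weightedSum : Multiset (ℕ × Matrix ι ι S) →+ Matrix ι ι S[X] :=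
  Multiset.sumAddMonoidHom.comp
    (Multiset.mapAddMonoidHom fun p => (X : S[X]) ^ p.1 • p.2.map C)

theorem weightedSum_apply (s : Multiset (ℕ × Matrix ι ι S)) :
    weightedSum s = (s.map fun p => (X : S[X]) ^ p.1 • p.2.map C).sum :=
  rfl

theorem weightedSum_cons (p : ℕ × Matrix ι ι S) (s : Multiset (ℕ × Matrix ι ι S)) :
    weightedSum (p ::ₘ s) = (X : S[X]) ^ p.1 • p.2.map C + weightedSum s := by
  simp [weightedSum_apply]

theorem weightedSum_map_mk_one (E : Multiset (Matrix ι ι S)) :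
    weightedSum (E.map ((1, ·))) = (X : S[X]) • E.sum.map C := by
  induction E using Multiset.induction_on with
  | empty => simp
  | cons D E ih => simp [weightedSum_cons, ih, Matrix.map_add, smul_add]

end

variable {ι S : Type*} [Fintype ι] [DecidableEq ι] [CommRing S]

theorem weightedSum_mem_matrix_span {N : ℕ} {s : Multiset (ℕ × Matrix ι ι S)}
    (hs : ∀ p ∈ s, N < p.1) : weightedSum s ∈ (Ideal.span {(X : S[X]) ^ (N + 1)}).matrix ι :=
  multiset_sum_mem _ fun _ hM => by
    obtain ⟨p, hp, rfl⟩ := Multiset.mem_map.mp hM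
    exact X_pow_smul_mem_matrix_span (hs p hp) _

theorem weightedSum_map_shift (m k : ℕ) (D : Matrix ι ι S) (s : Multiset (ℕ × Matrix ι ι S)) :
    weightedSum (s.map fun p => (p.1 + k * m, D ^ k * p.2)) =
      ((X : S[X]) ^ m • D.map C) ^ k * weightedSum s := by
  rw [weightedSum_apply, weightedSum_apply, Multiset.map_map, ← Multiset.sum_map_mul_left]
  refine congrArg _ (Multiset.map_congr rfl fun p _ => ?_)
  rw [Function.comp_apply, Matrix.map_mul, Matrix.map_pow, _root_.smul_pow, smul_mul_smul_comm,
    ← pow_mul, ← pow_add, mul_comm m k, add_comm]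

def shiftedCopies (N m : ℕ) (D : Matrix ι ι S) (s : Multiset (ℕ × Matrix ι ι S)) :
    Multiset (ℕ × Matrix ι ι S) :=
  ∑ k ∈ Finset.range (N + 1), s.map fun p => (p.1 + k * m, D ^ k * p.2)

theorem weightedSum_shiftedCopies (N m : ℕ) (D : Matrix ι ι S)
    (s : Multiset (ℕ × Matrix ι ι S)) :
    weightedSum (shiftedCopies N m D s) =
      (∑ k ∈ Finset.range (N + 1), ((X : S[X]) ^ m • D.map C) ^ k) * weightedSum s := by
  simp only [shiftedCopies, map_sum, weightedSum_map_shift, Finset.sum_mul]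

theorem shiftedCopies_eq_add (N m : ℕ) (D : Matrix ι ι S) (s : Multiset (ℕ × Matrix ι ι S)) :
    shiftedCopies N m D s =
      s + ∑ k ∈ Finset.range N, s.map fun p => (p.1 + (k + 1) * m, D ^ (k + 1) * p.2) := by
  simp [shiftedCopies, Finset.sum_range_succ', add_comm]

theorem det_one_sub_add_weightedSum_sub_mem (N : ℕ) {m : ℕ} (hm : 0 < m) (D : Matrix ι ι S)
    (s : Multiset (ℕ × Matrix ι ι S)) :
    det (1 - ((X : S[X]) ^ m • D.map C + weightedSum s)) -
      det (1 - (X : S[X]) ^ m • D.map C) * det (1 - weightedSum (shiftedCopies N m D s)) ∈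
      Ideal.span {(X : S[X]) ^ (N + 1)} := by
  set A := (X : S[X]) ^ m • D.map C
  set T := weightedSum s
  have hfactor : (1 - A) * (1 - (∑ k ∈ Finset.range (N + 1), A ^ k) * T) =
      1 - (A + T) + A ^ (N + 1) * T := by
    rw [mul_sub, mul_one, ← mul_assoc, mul_neg_geom_sum, sub_mul, one_mul]
    abel
  have hpow : A ^ (N + 1) * T = (X : S[X]) ^ (m * (N + 1)) • ((D.map C) ^ (N + 1) * T) := by
    rw [_root_.smul_pow, smul_mul_assoc, pow_mul]
  rw [← det_mul, weightedSum_shiftedCopies, hfactor]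
  refine det_sub_det_mem_of_sub_mem ?_
  rw [sub_add_cancel_left, hpow]
  exact neg_mem (X_pow_smul_mem_matrix_span (by nlinarith) _)

variable {B : Subring S} {W : Subsemigroup (Matrix ι ι S)} {N : ℕ}

theorem det_one_sub_weightedSum_mem_of_lt {s : Multiset (ℕ × Matrix ι ι S)}
    (hs : ∀ p ∈ s, N < p.1) : det (1 - weightedSum s) ∈ lowCoeffSubring B N := by
  have hdet := det_sub_det_mem_of_sub_mem (M := 1 - weightedSum s) (M' := 1) <| by
    rw [sub_sub_cancel_left]
    exact neg_mem (weightedSum_mem_matrix_span hs)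
  rw [det_one] at hdet
  exact mem_lowCoeffSubring_of_sub_mem (one_mem _) hdet

theorem det_one_sub_X_pow_smul_mem {m : ℕ} (hm : 0 < m) {D : Matrix ι ι S}
    (hD : ∀ j, D.charpolyRev.coeff j ∈ B) :
    det (1 - (X : S[X]) ^ m • D.map C) ∈ lowCoeffSubring B N := by
  rw [det_one_sub_X_pow_smul]
  exact expand_mem_lowCoeffSubring hm hD

theorem det_one_sub_weightedSum_add_mem (hW : ∀ D ∈ W, ∀ j, D.charpolyRev.coeff j ∈ B)
    {m : ℕ} (hm : 0 < m)
    (ih : ∀ s : Multiset (ℕ × Matrix ι ι S), (∀ p ∈ s, m < p.1 ∧ p.2 ∈ W) →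
      det (1 - weightedSum s) ∈ lowCoeffSubring B N)
    {E : Multiset (ℕ × Matrix ι ι S)} (hE : ∀ p ∈ E, p.1 = m ∧ p.2 ∈ W)
    {H : Multiset (ℕ × Matrix ι ι S)} (hH : ∀ p ∈ H, m < p.1 ∧ p.2 ∈ W) :
    det (1 - weightedSum (E + H)) ∈ lowCoeffSubring B N := by
  induction E using Multiset.induction_on generalizing H with
  | empty => simpa using ih H hH
  | cons p E ihE =>
    obtain ⟨rfl, hD⟩ := hE p (Multiset.mem_cons_self p E)
    have hE' : ∀ q ∈ E, q.1 = p.1 ∧ q.2 ∈ W := fun q hq => hE q (Multiset.mem_cons_of_mem hq)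
    have hEH : ∀ q ∈ E + H, p.1 ≤ q.1 ∧ q.2 ∈ W := fun q hq => by
      rcases Multiset.mem_add.mp hq with hq | hq
      exacts [(hE' q hq).imp ge_of_eq id, (hH q hq).imp le_of_lt id]
    rw [Multiset.cons_add, weightedSum_cons]
    refine mem_lowCoeffSubring_of_sub_mem
      (mul_mem (det_one_sub_X_pow_smul_mem hm (hW p.2 hD)) ?_)
      (det_one_sub_add_weightedSum_sub_mem N hm p.2 (E + H))
    rw [shiftedCopies_eq_add, add_assoc]
    refine ihE hE' fun q hq => ?_
    rcases Multiset.mem_add.mp hq with hq | hq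
    · exact hH q hq
    obtain ⟨k, -, hq⟩ := Multiset.mem_sum.mp hq
    obtain ⟨r, hr, rfl⟩ := Multiset.mem_map.mp hq
    obtain ⟨hr₁, hr₂⟩ := hEH r hr
    exact ⟨by nlinarith, W.pow_mul_mem hD hr₂ _⟩

theorem det_one_sub_weightedSum_mem (hW : ∀ D ∈ W, ∀ j, D.charpolyRev.coeff j ∈ B)
    {s : Multiset (ℕ × Matrix ι ι S)} (hs : ∀ p ∈ s, 0 < p.1 ∧ p.2 ∈ W) :
    det (1 - weightedSum s) ∈ lowCoeffSubring B N := by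
  refine Nat.decreasingInduction' (m := 1) (n := N + 1)
    (P := fun m => ∀ s : Multiset (ℕ × Matrix ι ι S), (∀ p ∈ s, m ≤ p.1 ∧ p.2 ∈ W) →
      det (1 - weightedSum s) ∈ lowCoeffSubring B N)
    (fun m _ hm ih s hs => ?_) (by omega)
    (fun s hs => det_one_sub_weightedSum_mem_of_lt fun p hp => (hs p hp).1) s hs
  rw [← Multiset.filter_add_not (·.1 = m) s]
  refine det_one_sub_weightedSum_add_mem hW hm (fun s hs => ih s fun p hp => (hs p hp).imp
    Nat.succ_le_of_lt id) (fun p hp => ?_) (fun p hp => ?_)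
  · obtain ⟨hp, hpm⟩ := Multiset.mem_filter.mp hp
    exact ⟨hpm, (hs p hp).2⟩
  · obtain ⟨hp, hpm⟩ := Multiset.mem_filter.mp hp
    exact ⟨lt_of_le_of_ne (hs p hp).1 (Ne.symm hpm), (hs p hp).2⟩

theorem coeff_charpolyRev_mem_of_mem_closure (hW : ∀ D ∈ W, ∀ j, D.charpolyRev.coeff j ∈ B)
    {M : Matrix ι ι S} (hM : M ∈ AddSubmonoid.closure (W : Set (Matrix ι ι S))) (j : ℕ) :
    M.charpolyRev.coeff j ∈ B := by
  obtain ⟨E, hE, rfl⟩ := AddSubmonoid.exists_multiset_of_mem_closure hM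
  have hdet := det_one_sub_weightedSum_mem (N := j) hW (s := E.map ((1, ·))) <| by
    simpa using hE
  rw [weightedSum_map_mk_one] at hdet
  exact hdet j le_rfl

end Matrix

section

open Matrix Polynomial

variable {𝔽 : Type} [Field 𝔽] {n d : ℕ}

theorem sigmaCoeff_eq_neg_one_pow_mul_coeff_charpolyRev {t : ℕ} (ht : t ≤ n)
    (A : Matrix (Fin n) (Fin n) (Rpoly 𝔽 n d)) :
    sigmaCoeff t A = (-1) ^ t * A.charpolyRev.coeff t := by
  rw [sigmaCoeff, coeff_charpolyRev_of_le A (by simpa using ht), Fintype.card_fin]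

variable (𝔽 n d) in
def wordSemigroup : Subsemigroup (Matrix (Fin n) (Fin n) (Rpoly 𝔽 n d)) :=
  Subsemigroup.closure (Set.range (Xgen 𝔽 n d) ∪ Set.range fun k => (Xgen 𝔽 n d k)ᵀ)

theorem sigmaCoeff_mem_invO_of_mem_wordSemigroup {D : Matrix (Fin n) (Fin n) (Rpoly 𝔽 n d)}
    (hD : D ∈ wordSemigroup 𝔽 n d) {t : ℕ} (ht₁ : 1 ≤ t) (htn : t ≤ n) :
    sigmaCoeff t D ∈ invO 𝔽 n d := by
  obtain ⟨w, hw, hwG, rfl⟩ := Subsemigroup.exists_list_of_mem_closure hD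
  refine Algebra.subset_adjoin ⟨t, ht₁, htn, w, hw, fun m hm => ?_, rfl⟩
  rcases hwG m hm with ⟨k, rfl⟩ | ⟨k, rfl⟩
  exacts [Or.inl ⟨k, rfl⟩, Or.inr ⟨k, rfl⟩]

theorem coeff_charpolyRev_mem_invO_of_mem_wordSemigroup
    {D : Matrix (Fin n) (Fin n) (Rpoly 𝔽 n d)} (hD : D ∈ wordSemigroup 𝔽 n d) (j : ℕ) :
    D.charpolyRev.coeff j ∈ invO 𝔽 n d := by
  rcases Nat.eq_zero_or_pos j with rfl | hj
  · rw [coeff_zero_eq_eval_zero, eval_charpolyRev]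
    exact one_mem _
  rcases le_or_gt j n with hjn | hjn
  · have hcoeff : D.charpolyRev.coeff j = (-1) ^ j * sigmaCoeff j D := by
      rw [sigmaCoeff_eq_neg_one_pow_mul_coeff_charpolyRev hjn, ← mul_assoc, ← mul_pow]
      simp
    rw [hcoeff]
    exact mul_mem (pow_mem (neg_mem (one_mem _)) j)
      (sigmaCoeff_mem_invO_of_mem_wordSemigroup hD hj hjn)
  · rw [coeff_charpolyRev_eq_zero_of_lt D (by simpa using hjn)]
    exact zero_mem _

theorem sigmaCoeff_mem_invO_of_mem_closure {M : Matrix (Fin n) (Fin n) (Rpoly 𝔽 n d)}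
    (hM : M ∈ AddSubmonoid.closure (wordSemigroup 𝔽 n d : Set _)) {t : ℕ} (ht : t ≤ n) :
    sigmaCoeff t M ∈ invO 𝔽 n d := by
  rw [sigmaCoeff_eq_neg_one_pow_mul_coeff_charpolyRev ht]
  exact mul_mem (pow_mem (neg_mem (one_mem _)) t)
    (coeff_charpolyRev_mem_of_mem_closure (B := (invO 𝔽 n d).toSubring)
      (fun _ hD j => coeff_charpolyRev_mem_invO_of_mem_wordSemigroup hD j) hM t)

variable (𝔽 n d) in
def symmetrize : Rpoly 𝔽 n d →ₐ[𝔽] Rpoly 𝔽 n d :=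
  MvPolynomial.aeval fun v => MvPolynomial.X v + MvPolynomial.X (v.2.1, v.1, v.2.2)

theorem map_XgenSym_symmetrize (k : Fin d) :
    (XgenSym 𝔽 n d k).map (symmetrize 𝔽 n d) = Xgen 𝔽 n d k + (Xgen 𝔽 n d k)ᵀ := by
  ext i j
  by_cases h : j ≤ i <;> simp [XgenSym, Xgen, symmetrize, h, add_comm]

theorem symmetrize_sigmaCoeff (t : ℕ) (A : Matrix (Fin n) (Fin n) (Rpoly 𝔽 n d)) :
    symmetrize 𝔽 n d (sigmaCoeff t A) = sigmaCoeff t (A.map (symmetrize 𝔽 n d)) := by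
  have hcharpoly := charpoly_map A (symmetrize 𝔽 n d : Rpoly 𝔽 n d →+* Rpoly 𝔽 n d)
  rw [RingHom.coe_coe] at hcharpoly
  rw [sigmaCoeff, sigmaCoeff, map_mul, map_pow, map_neg, map_one, hcharpoly, coeff_map,
    RingHom.coe_coe]

theorem MvPolynomial.IsHomogeneous.symmetrize {g : Rpoly 𝔽 n d} {i : ℕ}
    (hg : g.IsHomogeneous i) : (symmetrize 𝔽 n d g).IsHomogeneous i := by
  unfold _root_.symmetrize
  simpa only [one_mul] using
    hg.aeval (S := 𝔽) _ fun v => (isHomogeneous_X 𝔽 v).add (isHomogeneous_X 𝔽 _)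

theorem map_invOplus_symmetrize_le : (invOplus 𝔽 n d).map (symmetrize 𝔽 n d) ≤ invO 𝔽 n d := by
  rw [invOplus, AlgHom.map_adjoin, Algebra.adjoin_le_iff]
  rintro _ ⟨_, ⟨t, ht₁, htn, w, hw, hwX, rfl⟩, rfl⟩
  rw [SetLike.mem_coe, symmetrize_sigmaCoeff, Matrix.map_list_prod (symmetrize 𝔽 n d)]
  refine sigmaCoeff_mem_invO_of_mem_closure ?_ htn
  refine List.prod_mem_of_ne_nil (S := (wordSemigroup 𝔽 n d).nonUnitalSubsemiringClosure)
    (by simpa using hw) fun _ hM => ?_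
  obtain ⟨_, hm, rfl⟩ := List.mem_map.mp hM
  obtain ⟨k, rfl⟩ := hwX _ hm
  rw [map_XgenSym_symmetrize]
  exact add_mem (AddSubmonoid.subset_closure (Subsemigroup.subset_closure (Or.inl ⟨k, rfl⟩)))
    (AddSubmonoid.subset_closure (Subsemigroup.subset_closure (Or.inr ⟨k, rfl⟩)))

theorem Decomposable.map {A A' : Subalgebra 𝔽 (Rpoly 𝔽 n d)} {f : Rpoly 𝔽 n d}
    (φ : Rpoly 𝔽 n d →ₐ[𝔽] Rpoly 𝔽 n d) (hA : A.map φ ≤ A')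
    (hφ : ∀ {g : Rpoly 𝔽 n d} {i : ℕ}, g.IsHomogeneous i → (φ g).IsHomogeneous i)
    (hf : Decomposable 𝔽 A f) : Decomposable 𝔽 A' (φ f) := by
  have hmap := Submodule.mem_map_of_mem (f := φ.toLinearMap) hf
  rw [Submodule.map_span] at hmap
  refine Submodule.span_mono ?_ hmap
  rintro _ ⟨_, ⟨g, hg, h, hh, ⟨i, hi, hgi⟩, ⟨j, hj, hhj⟩, rfl⟩, rfl⟩
  exact ⟨φ g, hA ⟨g, hg, rfl⟩, φ h, hA ⟨h, hh, rfl⟩, ⟨i, hi, hφ hgi⟩, ⟨j, hj, hφ hhj⟩,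
    map_mul φ g h⟩

end

theorem decomposable_sym_imp_decomposable_sum_general
    (𝔽 : Type) [Field 𝔽] (n d : ℕ)
    (hdec : Decomposable 𝔽 (invOplus 𝔽 n d)
      (Matrix.trace (List.ofFn (fun k : Fin d => XgenSym 𝔽 n d k)).prod)) :
    Decomposable 𝔽 (invO 𝔽 n d)
      (Matrix.trace (List.ofFn (fun k : Fin d =>
        Xgen 𝔽 n d k + (Xgen 𝔽 n d k)ᵀ)).prod) := by
  have hsum := hdec.map (symmetrize 𝔽 n d) map_invOplus_symmetrize_le fun hg => hg.symmetrize
  rw [AddMonoidHom.map_trace, Matrix.map_list_prod (symmetrize 𝔽 n d), List.map_ofFn] at hsum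
  simpa only [Function.comp_def, map_XgenSym_symmetrize] using hsum

theorem decomposable_sym_imp_decomposable_sum
    (𝔽 : Type) [Field 𝔽] [Infinite 𝔽] (n d : ℕ) (hn : 2 ≤ n) (hd : 1 ≤ d)
    (hp2 : ringChar 𝔽 ≠ 2)
    (hdec : Decomposable 𝔽 (invOplus 𝔽 n d)
      (Matrix.trace (List.ofFn (fun k : Fin d => XgenSym 𝔽 n d k)).prod)) :
    Decomposable 𝔽 (invO 𝔽 n d)
      (Matrix.trace (List.ofFn (fun k : Fin d =>
        Xgen 𝔽 n d k + (Xgen 𝔽 n d k)ᵀ)).prod) :=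
  decomposable_sym_imp_decomposable_sum_general 𝔽 n d hdec
end
end
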